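/- arXiv:2407.08646 — 9 statements merged into one kernel-verified Lean document; each statement's English description precedes it below -/
import Mathlib

section
/- (Bendixson bound) For any real n×n matrix A and any complex root μ of the characteristic polynomial of A (over ℂ), the real part of μ is at most the largest eigenvalue of the symmetric matrix ½(A + Aᵀ). -/
open Matrix Polynomial

/-- `μ` is a characteristic root of the real matrix `A`, i.e. a root of the
characteristic polynomial of `A` viewed as a polynomial over `ℂ`. -/
def IsCharRoot {m : Type*} [Fintype m] [DecidableEq m] (A : Matrix m m ℝ) (μ : ℂ) : Prop :=
  ((A.map (fun x : ℝ => (x : ℂ))).charpoly).IsRoot μ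

/-- Rayleigh bound for real symmetric matrices. -/
lemma rayleigh_bound {n : ℕ} (S : Matrix (Fin n) (Fin n) ℝ) (hS : S.IsHermitian)
    (x : Fin n → ℝ) :
    x ⬝ᵥ (S *ᵥ x) ≤ (⨆ i, hS.eigenvalues i) * (x ⬝ᵥ x) := by
  set U : Matrix (Fin n) (Fin n) ℝ := (hS.eigenvectorUnitary : Matrix (Fin n) (Fin n) ℝ) with hU
  set c : Fin n → ℝ := star U *ᵥ x with hc
  have hvecMul : x ᵥ* U = c := by
    rw [hc, Matrix.star_eq_conjTranspose, Matrix.conjTranspose_eq_transpose_of_trivial,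
      Matrix.mulVec_transpose]
  have key : x ⬝ᵥ (S *ᵥ x) = ∑ i, hS.eigenvalues i * (c i)^2 := by
    conv_lhs => rw [hS.spectral_theorem, Unitary.conjStarAlgAut_apply]
    rw [← Matrix.mulVec_mulVec, ← Matrix.mulVec_mulVec, dotProduct_mulVec, hvecMul]
    simp [← hU, ← hc, Matrix.mulVec_diagonal, dotProduct, mul_comm, sq, mul_assoc, mul_left_comm]
  have key2 : x ⬝ᵥ x = ∑ i, (c i)^2 := by
    have h1 : U * star U = 1 := Matrix.mem_unitaryGroup_iff.mp hS.eigenvectorUnitary.2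
    calc x ⬝ᵥ x = x ⬝ᵥ ((U * star U) *ᵥ x) := by rw [h1, Matrix.one_mulVec]
    _ = ∑ i, (c i)^2 := by
        rw [← Matrix.mulVec_mulVec, dotProduct_mulVec, hvecMul]
        simp [← hc, dotProduct, sq]
  rw [key, key2, Finset.mul_sum]
  apply Finset.sum_le_sum
  intro i _
  have : hS.eigenvalues i ≤ ⨆ j, hS.eigenvalues j :=
    le_ciSup (Set.Finite.bddAbove (Set.finite_range _)) i
  nlinarith [sq_nonneg (c i)]

/-- **Bendixson bound**: the real part of any characteristic root of a real square
matrix `A` is at most the largest eigenvalue of the symmetric part `½(A + Aᵀ)`. -/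
theorem bendixson_bound {n : ℕ} (A : Matrix (Fin n) (Fin n) ℝ)
    (hS : (((1 : ℝ) / 2) • (A + Aᵀ)).IsHermitian)
    (μ : ℂ) (hμ : IsCharRoot A μ) :
    μ.re ≤ ⨆ i, hS.eigenvalues i := by
  set B : Matrix (Fin n) (Fin n) ℂ := A.map (fun x : ℝ => (x : ℂ)) with hB
  -- get an eigenvector
  obtain ⟨v, hv0, hv⟩ : ∃ v ≠ 0, B *ᵥ v = μ • v := by
    have h1 : (Matrix.scalar (Fin n) μ - B).det = 0 := by
      have h := hμ
      unfold IsCharRoot Polynomial.IsRoot Matrix.charpoly at h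
      rw [eval_det, matPolyEquiv_charmatrix] at h
      simpa using h
    obtain ⟨v, hv0, hv⟩ := (Matrix.exists_mulVec_eq_zero_iff).2 h1
    refine ⟨v, hv0, ?_⟩
    rw [sub_mulVec] at hv
    have h2 : Matrix.scalar (Fin n) μ *ᵥ v = μ • v := by
      ext i
      simp [Matrix.scalar, Matrix.mulVec_diagonal]
    rw [h2] at hv
    exact (sub_eq_zero.mp hv).symm
  set x : Fin n → ℝ := fun i => (v i).re with hx
  set y : Fin n → ℝ := fun i => (v i).im with hy
  set S : Matrix (Fin n) (Fin n) ℝ := ((1 : ℝ) / 2) • (A + Aᵀ) with hSdef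
  -- key real-part computation
  have hRe : (star v ⬝ᵥ (B *ᵥ v)).re = x ⬝ᵥ (A *ᵥ x) + y ⬝ᵥ (A *ᵥ y) := by
    simp only [dotProduct, Matrix.mulVec, Pi.star_apply, hB, Matrix.map_apply,
      Finset.mul_sum, Complex.re_sum, ← Finset.sum_add_distrib]
    apply Finset.sum_congr rfl
    intro i _
    apply Finset.sum_congr rfl
    intro j _
    simp only [Complex.star_def, Complex.mul_re, Complex.mul_im, Complex.conj_re,
      Complex.conj_im, Complex.ofReal_re, Complex.ofReal_im, hx, hy]
    ring
  have hvv : (star v ⬝ᵥ v).re = x ⬝ᵥ x + y ⬝ᵥ y := by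
    simp only [dotProduct, Pi.star_apply, Complex.re_sum, ← Finset.sum_add_distrib]
    apply Finset.sum_congr rfl
    intro i _
    simp [Complex.mul_re, hx, hy]
  have hvvpos : 0 < x ⬝ᵥ x + y ⬝ᵥ y := by
    rcases Function.ne_iff.mp hv0 with ⟨i, hi⟩
    have h1 : 0 < (v i).re^2 + (v i).im^2 := by
      rcases Complex.ext_iff.not.mp hi with h
      push_neg at h
      by_contra hcon
      push_neg at hcon
      have hre : (v i).re = 0 := by nlinarith [sq_nonneg (v i).re, sq_nonneg (v i).im]
      have him : (v i).im = 0 := by nlinarith [sq_nonneg (v i).re, sq_nonneg (v i).im]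
      exact absurd (Complex.ext hre him) hi
    have h2 : x ⬝ᵥ x = ∑ j, (x j)^2 := by simp [dotProduct, sq]
    have h3 : y ⬝ᵥ y = ∑ j, (y j)^2 := by simp [dotProduct, sq]
    rw [h2, h3, ← Finset.sum_add_distrib]
    have := Finset.sum_le_sum (f := fun _ : Fin n => (0:ℝ))
      (g := fun j => (x j)^2 + (y j)^2) (s := Finset.univ)
      (fun j _ => by positivity)
    calc (0:ℝ) < (x i)^2 + (y i)^2 := h1
    _ ≤ ∑ j, ((x j)^2 + (y j)^2) :=
        Finset.single_le_sum (f := fun j => (x j)^2 + (y j)^2) (fun j _ => by positivity)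
          (Finset.mem_univ i)
  -- symmetric part quadratic form equality
  have hsym : ∀ z : Fin n → ℝ, z ⬝ᵥ (A *ᵥ z) = z ⬝ᵥ (S *ᵥ z) := by
    intro z
    have ht : z ⬝ᵥ (Aᵀ *ᵥ z) = z ⬝ᵥ (A *ᵥ z) := by
      rw [Matrix.mulVec_transpose, dotProduct_mulVec, dotProduct_comm]
    rw [hSdef]
    rw [Matrix.smul_mulVec, Matrix.add_mulVec, dotProduct_smul,
      dotProduct_add, ht, smul_eq_mul]
    ring
  -- eigen equation real part
  have heig : (star v ⬝ᵥ (B *ᵥ v)).re = μ.re * (x ⬝ᵥ x + y ⬝ᵥ y) := by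
    rw [hv]
    have : star v ⬝ᵥ (μ • v) = μ * (star v ⬝ᵥ v) := by
      simp only [dotProduct, Finset.mul_sum, Pi.smul_apply, smul_eq_mul, Pi.star_apply]
      exact Finset.sum_congr rfl fun i _ => by ring
    rw [this]
    have him : (star v ⬝ᵥ v).im = 0 := by
      simp only [dotProduct, Pi.star_apply, Complex.im_sum]
      apply Finset.sum_eq_zero
      intro i _
      simp [Complex.mul_im]
      ring
    rw [Complex.mul_re, him, hvv]
    ring
  -- combine
  have hb1 := rayleigh_bound S hS x
  have hb2 := rayleigh_bound S hS y
  have hkey : μ.re * (x ⬝ᵥ x + y ⬝ᵥ y) ≤ (⨆ i, hS.eigenvalues i) * (x ⬝ᵥ x + y ⬝ᵥ y) := by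
    rw [← heig, hRe, hsym x, hsym y]
    nlinarith
  exact le_of_mul_le_mul_right (by linarith) hvvpos
end

section
/- Let R_m be a real n×n symmetric positive definite matrix. Then every λ ∈ ℂ satisfying det(λ²·I + λ·R_m^ℂ + I) = 0 (determinant over ℂ, R_m^ℂ the entrywise complexification of R_m) has strictly negative real part. -/
open Matrix

/-- If `R_m` is real symmetric positive definite, then every `λ ∈ ℂ` with
`det(λ²·I + λ·R_mᶜ + I) = 0` has strictly negative real part. -/
theorem quadratic_pencil_roots_neg_re {n : ℕ} (Rm : Matrix (Fin n) (Fin n) ℝ)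
    (hRm : Rm.PosDef) (hsymm : Rmᵀ = Rm) (lam : ℂ)
    (hlam : (lam ^ 2 • (1 : Matrix (Fin n) (Fin n) ℂ) +
      lam • (Rm.map (fun x : ℝ => (x : ℂ))) + 1).det = 0) :
    lam.re < 0 := by
  classical
  obtain ⟨v, hv0, hveq⟩ := (Matrix.exists_mulVec_eq_zero_iff).mpr hlam
  set M : Matrix (Fin n) (Fin n) ℂ := Rm.map (fun x : ℝ => (x : ℂ)) with hM
  -- vector-level equation
  have hveq' : lam ^ 2 • v + lam • M.mulVec v + v = 0 := by
    have := hveq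
    rwa [Matrix.add_mulVec, Matrix.add_mulVec, Matrix.smul_mulVec,
      Matrix.smul_mulVec, Matrix.one_mulVec] at this
  -- scalar equation by pairing with star v
  have hscal : lam ^ 2 * (star v ⬝ᵥ v) + lam * (star v ⬝ᵥ M.mulVec v)
      + (star v ⬝ᵥ v) = 0 := by
    have := congrArg (fun w => star v ⬝ᵥ w) hveq'
    simpa [dotProduct_add, dotProduct_smul, smul_eq_mul] using this
  -- real and imaginary parts of v
  set x : Fin n → ℝ := fun i => (v i).re with hx
  set y : Fin n → ℝ := fun i => (v i).im with hy
  set A : ℝ := ∑ i, Complex.normSq (v i) with hA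
  set B : ℝ := x ⬝ᵥ Rm.mulVec x + y ⬝ᵥ Rm.mulVec y with hB
  -- star v ⬝ᵥ v = A
  have haA : (star v ⬝ᵥ v) = (A : ℂ) := by
    simp only [hA, dotProduct, Pi.star_apply, Complex.ofReal_sum]
    refine Finset.sum_congr rfl fun i _ => ?_
    rw [mul_comm, Complex.star_def, Complex.mul_conj]
  -- symmetric bilinear form fact
  have hsym2 : ∀ a b : Fin n → ℝ, a ⬝ᵥ Rm.mulVec b = b ⬝ᵥ Rm.mulVec a := by
    intro a b
    rw [Matrix.dotProduct_mulVec a Rm b]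
    nth_rewrite 1 [← hsymm]
    rw [Matrix.vecMul_transpose, dotProduct_comm]
  -- complexified bilinear form of real vectors
  have hL : ∀ a b : Fin n → ℝ,
      (fun i => (a i : ℂ)) ⬝ᵥ M.mulVec (fun i => (b i : ℂ))
        = ((a ⬝ᵥ Rm.mulVec b : ℝ) : ℂ) := by
    intro a b
    simp only [dotProduct, Matrix.mulVec, hM, Matrix.map_apply]
    push_cast
    rfl
  -- decompose v
  have hv : v = (fun i => ((x i : ℂ))) + Complex.I • (fun i => ((y i : ℂ))) := by
    funext i
    simp [hx, hy, Complex.ext_iff]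
  have hstarv : star v = (fun i => ((x i : ℂ))) + (-Complex.I) • (fun i => ((y i : ℂ))) := by
    funext i
    simp [hx, hy, Complex.ext_iff]
  -- star v ⬝ᵥ M v = B
  have hbB : (star v ⬝ᵥ M.mulVec v) = (B : ℂ) := by
    rw [hstarv]
    conv_lhs => rw [hv]
    rw [Matrix.mulVec_add, Matrix.mulVec_smul]
    simp only [dotProduct_add, add_dotProduct, smul_dotProduct, dotProduct_smul,
      smul_eq_mul, hL]
    rw [hsym2 y x]
    push_cast [hB]
    ring_nf
    rw [Complex.I_sq]
    ring
  rw [haA, hbB] at hscal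
  -- positivity of A
  have hApos : 0 < A := by
    have : ∃ i, v i ≠ 0 := by
      by_contra h
      push_neg at h
      exact hv0 (funext h)
    obtain ⟨i, hi⟩ := this
    refine Finset.sum_pos' (fun j _ => Complex.normSq_nonneg _) ⟨i, Finset.mem_univ i, ?_⟩
    exact Complex.normSq_pos.mpr hi
  -- positivity of B
  have hBpos : 0 < B := by
    have hxy : x ≠ 0 ∨ y ≠ 0 := by
      by_contra h
      push_neg at h
      apply hv0
      funext i
      have h1 : (v i).re = 0 := congrFun h.1 i
      have h2 : (v i).im = 0 := congrFun h.2 i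
      exact Complex.ext h1 h2
    have hxx : 0 ≤ x ⬝ᵥ Rm.mulVec x := by
      have := hRm.posSemidef.dotProduct_mulVec_nonneg x
      simpa using this
    have hyy : 0 ≤ y ⬝ᵥ Rm.mulVec y := by
      have := hRm.posSemidef.dotProduct_mulVec_nonneg y
      simpa using this
    rcases hxy with h | h
    · have := hRm.dotProduct_mulVec_pos h
      simp only [RCLike.re_to_real, star_trivial] at this
      rw [hB]; linarith
    · have := hRm.dotProduct_mulVec_pos h
      simp only [RCLike.re_to_real, star_trivial] at this
      rw [hB]; linarith
  -- extract real and imaginary parts of the scalar equation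
  rw [Complex.ext_iff] at hscal
  obtain ⟨h1, h2⟩ := hscal
  simp only [Complex.add_re, Complex.add_im, Complex.mul_re, Complex.mul_im,
    Complex.ofReal_re, Complex.ofReal_im, Complex.zero_re, Complex.zero_im,
    pow_two] at h1 h2
  set p := lam.re
  set q := lam.im
  -- h1 : (p*p - q*q)*A - ... etc
  by_contra hcon
  push_neg at hcon
  have h2' : q * (2 * p * A + B) = 0 := by ring_nf; ring_nf at h2; linarith
  rcases mul_eq_zero.mp h2' with hq | hpb
  · rw [hq] at h1
    nlinarith [h1, hApos, hBpos, mul_nonneg hcon hBpos.le, mul_nonneg (mul_nonneg hcon hcon) hApos.le]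
  · nlinarith [hApos, hBpos, mul_nonneg hcon hApos.le]
end

section
/- Let R_m be a real n×n symmetric positive definite matrix. Then the real 2n×2n block matrix B̄ = [[0, I], [−I, −R_m]] is Hurwitz, i.e., every complex root of the characteristic polynomial of B̄ has strictly negative real part. -/
open Matrix Polynomial
open scoped ComplexOrder

private lemma quad_root_re_neg {a r : ℝ} (ha : 0 < a) (hr : 0 < r) {μ : ℂ}
    (h : μ ^ 2 * (a : ℂ) + μ * (r : ℂ) + (a : ℂ) = 0) : μ.re < 0 := by
  have hre := congrArg Complex.re h
  have him := congrArg Complex.im h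
  simp [Complex.add_re, Complex.add_im, Complex.mul_re, Complex.mul_im, pow_two] at hre him
  set s := μ.re with hs
  set t := μ.im with ht
  rcases eq_or_ne t 0 with h0 | h0
  · rw [h0] at hre
    nlinarith [hre, ha, hr]
  · have h3 : t * (2 * s * a + r) = 0 := by linear_combination him
    have h2 : 2 * s * a + r = 0 := by
      rcases mul_eq_zero.mp h3 with h | h
      · exact absurd h h0
      · exact h
    nlinarith [h2, ha, hr]

/-- If `R_m` is real symmetric positive definite, then the block matrix
`B̄ = [[0, I], [−I, −R_m]]` is Hurwitz: every characteristic root has strictly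
negative real part. -/
theorem companion_block_hurwitz {n : ℕ} (Rm : Matrix (Fin n) (Fin n) ℝ)
    (hRm : Rm.PosDef) (hsymm : Rmᵀ = Rm) :
    ∀ μ : ℂ, IsCharRoot
      (Matrix.fromBlocks (0 : Matrix (Fin n) (Fin n) ℝ) (1 : Matrix (Fin n) (Fin n) ℝ)
        (-1 : Matrix (Fin n) (Fin n) ℝ) (-Rm)) μ → μ.re < 0 := by
  intro μ hμ
  classical
  set B : Matrix (Fin n ⊕ Fin n) (Fin n ⊕ Fin n) ℝ :=
    Matrix.fromBlocks 0 1 (-1) (-Rm) with hB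
  set B' : Matrix (Fin n ⊕ Fin n) (Fin n ⊕ Fin n) ℂ := B.map (fun x : ℝ => (x : ℂ)) with hB'def
  set RC : Matrix (Fin n) (Fin n) ℂ := Rm.map (fun x : ℝ => (x : ℂ)) with hRC
  -- the root gives a singular matrix
  have hcm : (Matrix.charmatrix B').map (Polynomial.evalRingHom μ)
      = μ • (1 : Matrix (Fin n ⊕ Fin n) (Fin n ⊕ Fin n) ℂ) - B' := by
    ext i j
    by_cases hij : i = j
    · subst hij
      simp [Matrix.charmatrix_apply_eq]
    · simp [Matrix.charmatrix_apply_ne _ _ _ hij, Matrix.one_apply_ne hij]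
  have hdet : (μ • (1 : Matrix (Fin n ⊕ Fin n) (Fin n ⊕ Fin n) ℂ) - B').det = 0 := by
    rw [← hcm, ← RingHom.mapMatrix_apply, ← RingHom.map_det]
    simpa [IsCharRoot, Matrix.charpoly, Polynomial.IsRoot, Polynomial.coe_evalRingHom] using hμ
  obtain ⟨v, hv0, hveq⟩ := (Matrix.exists_mulVec_eq_zero_iff).mpr hdet
  have hBv : B' *ᵥ v = μ • v := by
    rw [Matrix.sub_mulVec, Matrix.smul_mulVec, Matrix.one_mulVec, sub_eq_zero] at hveq
    exact hveq.symm
  -- block structure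
  have hblocks : B' = Matrix.fromBlocks 0 1 (-1) (-RC) := by
    ext (i | i) (j | j) <;>
      simp [hB'def, hB, hRC, Matrix.map_apply, Matrix.one_apply, apply_ite]
  set x : Fin n → ℂ := fun i => v (Sum.inl i) with hx
  set y : Fin n → ℂ := fun i => v (Sum.inr i) with hyy
  have hvelim : v = Sum.elim x y := by
    funext i
    cases i <;> rfl
  rw [hblocks, hvelim, Matrix.fromBlocks_mulVec] at hBv
  have hy : y = μ • x := by
    funext i
    have := congrFun hBv (Sum.inl i)
    simpa using this
  have hxeq : ∀ i, -(x i) + (-(RC *ᵥ y)) i = μ * y i := by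
    intro i
    have := congrFun hBv (Sum.inr i)
    simpa [Matrix.neg_mulVec, Matrix.one_mulVec] using this
  have hx0 : x ≠ 0 := by
    intro h
    apply hv0
    rw [hvelim, h, hy, h]
    funext i
    cases i <;> simp
  -- the quadratic vector equation
  have key : μ ^ 2 • x + μ • (RC *ᵥ x) + x = 0 := by
    funext i
    have h1 := hxeq i
    rw [hy, Matrix.mulVec_smul] at h1
    simp only [Pi.neg_apply, Pi.smul_apply, smul_eq_mul] at h1
    simp only [Pi.add_apply, Pi.smul_apply, smul_eq_mul, Pi.zero_apply]
    linear_combination -h1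
  -- dot with star x
  have hscal : μ ^ 2 * (star x ⬝ᵥ x) + μ * (star x ⬝ᵥ (RC *ᵥ x)) + (star x ⬝ᵥ x) = 0 := by
    have h2 := congrArg (fun w => star x ⬝ᵥ w) key
    simpa [dotProduct_add, dotProduct_smul, smul_eq_mul, mul_assoc] using h2
  have ha : 0 < star x ⬝ᵥ x := dotProduct_star_self_pos_iff.mpr hx0
  -- decompose x into real and imaginary parts
  set u : Fin n → ℝ := fun i => (x i).re with hu
  set w : Fin n → ℝ := fun i => (x i).im with hw
  set uc : Fin n → ℂ := fun i => ((u i : ℝ) : ℂ) with huc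
  set wc : Fin n → ℂ := fun i => ((w i : ℝ) : ℂ) with hwc
  have hxdec : x = uc + Complex.I • wc := by
    funext i
    apply Complex.ext <;> simp [huc, hwc, hu, hw]
  have hstarx : star x = uc - Complex.I • wc := by
    funext i
    apply Complex.ext <;> simp [huc, hwc, hu, hw]
  have hRCt : RCᵀ = RC := by
    rw [hRC, ← Matrix.transpose_map, hsymm]
  have hsymC : uc ⬝ᵥ (RC *ᵥ wc) = wc ⬝ᵥ (RC *ᵥ uc) := by
    rw [Matrix.dotProduct_mulVec, ← hRCt, Matrix.vecMul_transpose, dotProduct_comm, hRCt]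
  have hmapq : ∀ z : Fin n → ℝ, ((fun i => ((z i : ℝ) : ℂ)) ⬝ᵥ (RC *ᵥ fun i => ((z i : ℝ) : ℂ)))
      = ((z ⬝ᵥ (Rm *ᵥ z) : ℝ) : ℂ) := by
    intro z
    have h1 : (fun i => ((z i : ℝ) : ℂ)) = Complex.ofRealHom ∘ z := rfl
    have h2 : (RC *ᵥ fun i => ((z i : ℝ) : ℂ)) = Complex.ofRealHom ∘ (Rm *ᵥ z) := by
      funext i
      rw [h1, hRC]
      exact (RingHom.map_mulVec Complex.ofRealHom Rm z i).symm
    rw [h2, h1, ← RingHom.map_dotProduct]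
    rfl
  have hr : star x ⬝ᵥ (RC *ᵥ x) = ((u ⬝ᵥ (Rm *ᵥ u) + w ⬝ᵥ (Rm *ᵥ w) : ℝ) : ℂ) := by
    rw [hstarx]
    nth_rewrite 1 [hxdec]
    rw [Matrix.mulVec_add, Matrix.mulVec_smul]
    rw [sub_dotProduct, dotProduct_add, dotProduct_add, dotProduct_smul, dotProduct_smul,
      smul_dotProduct, smul_dotProduct, smul_eq_mul, smul_eq_mul, smul_eq_mul, smul_eq_mul]
    rw [hsymC]
    push_cast
    rw [← hmapq u, ← hmapq w]
    ring_nf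
    rw [Complex.I_sq]
    ring
  -- positivity of the real quadratic form
  have hpos : 0 < u ⬝ᵥ (Rm *ᵥ u) + w ⬝ᵥ (Rm *ᵥ w) := by
    have huw : u ≠ 0 ∨ w ≠ 0 := by
      by_contra h
      push_neg at h
      apply hx0
      rw [hxdec]
      funext i
      simp [huc, hwc, h.1, h.2]
    have hq : ∀ z : Fin n → ℝ, z ≠ 0 → 0 < z ⬝ᵥ (Rm *ᵥ z) := by
      intro z hz
      have := hRm.dotProduct_mulVec_pos hz
      simpa using this
    have hq0 : ∀ z : Fin n → ℝ, 0 ≤ z ⬝ᵥ (Rm *ᵥ z) := by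
      intro z
      have := hRm.posSemidef.dotProduct_mulVec_nonneg z
      simpa using this
    rcases huw with h | h
    · have := hq u h
      have := hq0 w
      linarith
    · have := hq w h
      have := hq0 u
      linarith
  -- a is a positive real
  have haim : (star x ⬝ᵥ x).im = 0 := ((Complex.lt_def.mp ha).2).symm
  have hare : 0 < (star x ⬝ᵥ x).re := by simpa using (Complex.lt_def.mp ha).1
  have haeq : (star x ⬝ᵥ x) = (((star x ⬝ᵥ x).re : ℝ) : ℂ) := by
    apply Complex.ext <;> simp [haim]
  rw [haeq, hr] at hscal
  exact quad_root_re_neg hare hpos hscal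
end

section
/- Let R_m be a real n_m×n_m symmetric positive definite matrix, J_e a real n_e×n_e skew-symmetric matrix, R̄_e a real n_e×n_e symmetric positive definite matrix, and D_d an arbitrary real n_e×n_m matrix. Then the real (2n_m+n_e)×(2n_m+n_e) block matrix F_d = [[0, I, 0], [−I, −R_m, 0], [0, D_d, J_e − R̄_e]] is Hurwitz, i.e., every complex root of the characteristic polynomial of F_d has strictly negative real part. -/
open Matrix

section AuxLemmas

variable {n : Type*} [Fintype n] [DecidableEq n]

omit [DecidableEq n] in
lemma re_form_aux (R : Matrix n n ℝ) (v : n → ℂ) :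
    (star v ⬝ᵥ ((R.map (fun x : ℝ => (x : ℂ))) *ᵥ v)).re
      = (fun i => (v i).re) ⬝ᵥ (R *ᵥ fun i => (v i).re)
        + (fun i => (v i).im) ⬝ᵥ (R *ᵥ fun i => (v i).im) := by
  simp only [dotProduct, mulVec, Pi.star_apply, map_apply, Complex.re_sum,
    Complex.mul_re, Complex.mul_im, Complex.im_sum, Finset.mul_sum, RCLike.star_def,
    Complex.conj_re, Complex.conj_im, Complex.ofReal_re, Complex.ofReal_im]
  rw [← Finset.sum_add_distrib]
  apply Finset.sum_congr rfl
  intro i _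
  rw [← Finset.sum_add_distrib]
  apply Finset.sum_congr rfl
  intro j _
  ring

omit [DecidableEq n] in
lemma im_form_aux (R : Matrix n n ℝ) (hR : Rᵀ = R) (v : n → ℂ) :
    (star v ⬝ᵥ ((R.map (fun x : ℝ => (x : ℂ))) *ᵥ v)).im = 0 := by
  have key : ∀ a b : n → ℝ, (∑ i, ∑ j, R i j * (a i * b j)) = ∑ i, ∑ j, R i j * (b i * a j) := by
    intro a b
    rw [Finset.sum_comm]
    apply Finset.sum_congr rfl; intro i _; apply Finset.sum_congr rfl; intro j _
    rw [show R j i = R i j from congrFun (congrFun hR i) j]; ring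
  have expand : (star v ⬝ᵥ ((R.map (fun x : ℝ => (x : ℂ))) *ᵥ v)).im
      = (∑ i, ∑ j, R i j * ((v i).re * (v j).im)) - ∑ i, ∑ j, R i j * ((v i).im * (v j).re) := by
    simp only [dotProduct, mulVec, Pi.star_apply, map_apply, Complex.im_sum,
      Complex.mul_re, Complex.mul_im, Complex.re_sum, Finset.mul_sum, RCLike.star_def,
      Complex.conj_re, Complex.conj_im, Complex.ofReal_re, Complex.ofReal_im]
    rw [← Finset.sum_sub_distrib]
    apply Finset.sum_congr rfl; intro i _
    rw [← Finset.sum_sub_distrib]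
    apply Finset.sum_congr rfl; intro j _; ring
  rw [expand, key (fun i => (v i).re) (fun i => (v i).im)]
  exact sub_self _

omit [DecidableEq n] in
lemma parts_ne_zero_aux (v : n → ℂ) (hv : v ≠ 0) :
    (fun i => (v i).re) ≠ (0 : n → ℝ) ∨ (fun i => (v i).im) ≠ (0 : n → ℝ) := by
  by_contra h
  push_neg at h
  exact hv (funext fun i => Complex.ext (congrFun h.1 i) (congrFun h.2 i))

lemma posdef_form_aux (R : Matrix n n ℝ) (hR : R.PosDef) (hsymm : Rᵀ = R) (v : n → ℂ)
    (hv : v ≠ 0) :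
    ∃ r : ℝ, 0 < r ∧ star v ⬝ᵥ ((R.map (fun x : ℝ => (x : ℂ))) *ᵥ v) = (r : ℂ) := by
  set q := star v ⬝ᵥ ((R.map (fun x : ℝ => (x : ℂ))) *ᵥ v) with hq
  refine ⟨q.re, ?_, ?_⟩
  · rw [re_form_aux]
    have hsd := hR.posSemidef
    rcases parts_ne_zero_aux v hv with ha | hb
    · have h1 := hR.dotProduct_mulVec_pos ha
      have h2 := hsd.dotProduct_mulVec_nonneg (fun i => (v i).im)
      simp only [star_trivial] at h1 h2
      linarith
    · have h1 := hsd.dotProduct_mulVec_nonneg (fun i => (v i).re)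
      have h2 := hR.dotProduct_mulVec_pos hb
      simp only [star_trivial] at h1 h2
      linarith
  · rw [Complex.ext_iff]
    refine ⟨by simp, ?_⟩
    rw [Complex.ofReal_im]
    exact im_form_aux R hsymm v

omit [DecidableEq n] in
lemma skew_form_re_aux (J : Matrix n n ℝ) (hJ : Jᵀ = -J) (v : n → ℂ) :
    (star v ⬝ᵥ ((J.map (fun x : ℝ => (x : ℂ))) *ᵥ v)).re = 0 := by
  have key : ∀ x : n → ℝ, x ⬝ᵥ (J *ᵥ x) = 0 := by
    intro x
    have h1 : x ⬝ᵥ (J *ᵥ x) = -(x ⬝ᵥ (J *ᵥ x)) := by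
      conv_lhs => rw [Matrix.dotProduct_mulVec, ← Matrix.mulVec_transpose, hJ,
        Matrix.neg_mulVec, neg_dotProduct, dotProduct_comm]
    linarith
  rw [re_form_aux, key, key, add_zero]

lemma star_dot_self_aux (v : n → ℂ) (hv : v ≠ 0) :
    ∃ s : ℝ, 0 < s ∧ star v ⬝ᵥ v = (s : ℂ) := by
  have h1 : (1 : Matrix n n ℝ).map (fun x : ℝ => (x : ℂ)) = 1 :=
    Matrix.map_one _ Complex.ofReal_zero Complex.ofReal_one
  have := posdef_form_aux 1 Matrix.PosDef.one Matrix.transpose_one v hv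
  rw [h1, Matrix.one_mulVec] at this
  exact this

lemma exists_eigvec_of_isRoot (M : Matrix n n ℂ) (μ : ℂ) (h : M.charpoly.IsRoot μ) :
    ∃ v : n → ℂ, v ≠ 0 ∧ M *ᵥ v = μ • v := by
  have hdet : (μ • (1 : Matrix n n ℂ) - M).det = 0 := by
    have heval : M.charpoly.eval μ = (μ • (1 : Matrix n n ℂ) - M).det := by
      rw [Matrix.charpoly, ← Polynomial.coe_evalRingHom, RingHom.map_det]
      congr 1
      ext i j
      by_cases hij : i = j <;>
        simp [hij, charmatrix_apply_eq, charmatrix_apply_ne, Matrix.one_apply,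
          Matrix.smul_apply, Matrix.sub_apply]
    rw [← heval]; exact h
  obtain ⟨v, hv, hMv⟩ := (Matrix.exists_mulVec_eq_zero_iff).mpr hdet
  refine ⟨v, hv, ?_⟩
  have h2 : μ • v - M *ᵥ v = 0 := by
    simpa [sub_mulVec, smul_mulVec, one_mulVec] using hMv
  exact (sub_eq_zero.mp h2).symm

lemma diss_block_re_neg (J R : Matrix n n ℝ) (hJ : Jᵀ = -J) (hR : R.PosDef)
    (hsymm : Rᵀ = R) (μ : ℂ) (v : n → ℂ) (hv : v ≠ 0)
    (heig : ((J - R).map (fun x : ℝ => (x : ℂ))) *ᵥ v = μ • v) : μ.re < 0 := by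
  obtain ⟨r, hr, hrq⟩ := posdef_form_aux R hR hsymm v hv
  obtain ⟨s, hs, hsq⟩ := star_dot_self_aux v hv
  have hmap : ((J - R).map (fun x : ℝ => (x : ℂ)))
      = J.map (fun x : ℝ => (x : ℂ)) - R.map (fun x : ℝ => (x : ℂ)) := by
    ext i j; simp [Matrix.map_apply, Complex.ofReal_sub]
  have key : (star v ⬝ᵥ (((J - R).map (fun x : ℝ => (x : ℂ))) *ᵥ v)).re = μ.re * s := by
    rw [heig, dotProduct_smul]
    rw [hsq]
    simp [Complex.mul_re]
  rw [hmap, Matrix.sub_mulVec, dotProduct_sub, Complex.sub_re, skew_form_re_aux J hJ,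
    hrq] at key
  simp only [Complex.ofReal_re, zero_sub] at key
  nlinarith

lemma mech_block_re_neg (Rm : Matrix n n ℝ) (hRm : Rm.PosDef) (hsymm : Rmᵀ = Rm)
    (μ : ℂ) (v : (n ⊕ n) → ℂ) (hv : v ≠ 0)
    (heig : (fromBlocks (0 : Matrix n n ℂ) (1 : Matrix n n ℂ) (-1 : Matrix n n ℂ)
      (-(Rm.map (fun x : ℝ => (x : ℂ))))) *ᵥ v = μ • v) : μ.re < 0 := by
  set Rc := Rm.map (fun x : ℝ => (x : ℂ)) with hRc
  set x : n → ℂ := v ∘ Sum.inl with hx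
  set y : n → ℂ := v ∘ Sum.inr with hy
  have hve : v = Sum.elim x y := funext fun i => by cases i <;> rfl
  rw [hve, fromBlocks_mulVec] at heig
  have e1 : y = μ • x := by
    funext i
    have := congrFun heig (Sum.inl i)
    simpa using this
  have e2 : (-1 : Matrix n n ℂ) *ᵥ x + (-Rc) *ᵥ y = μ • y := by
    funext i
    have := congrFun heig (Sum.inr i)
    simpa using this
  have hxne : x ≠ 0 := by
    intro hx0
    apply hv
    rw [hve, hx0]
    rw [hx0] at e1
    simp only [smul_zero] at e1
    rw [e1]
    funext i; cases i <;> rfl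
  have e3 : μ • (Rc *ᵥ x) = -((1 + μ ^ 2) • x) := by
    have : -x - Rc *ᵥ (μ • x) = μ • (μ • x) := by
      rw [← e1]
      rw [← e2]
      simp [Matrix.neg_mulVec, Matrix.one_mulVec, sub_eq_add_neg]
    rw [mulVec_smul] at this
    have h4 : μ • (Rc *ᵥ x) = -x - (μ • μ • x) := by
      rw [← this]; ring_nf
    rw [h4]
    module
  obtain ⟨r, hr, hrq⟩ := posdef_form_aux Rm hRm hsymm x hxne
  obtain ⟨s, hs, hsq⟩ := star_dot_self_aux x hxne
  have e4 : μ * (r : ℂ) = -((1 + μ ^ 2) * (s : ℂ)) := by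
    have := congrArg (fun w => star x ⬝ᵥ w) e3
    simpa [dotProduct_smul, dotProduct_neg, hRc, hrq, hsq, smul_eq_mul] using this
  have hre := congrArg Complex.re e4
  have him := congrArg Complex.im e4
  simp only [Complex.mul_re, Complex.mul_im, Complex.neg_re, Complex.neg_im,
    Complex.add_re, Complex.add_im, Complex.one_re, Complex.one_im, Complex.ofReal_re,
    Complex.ofReal_im, pow_two, mul_zero, zero_mul, sub_zero, add_zero, zero_add] at hre him
  set a := μ.re
  set b := μ.im
  by_contra hcon
  push_neg at hcon
  have hb : b = 0 := by
    by_contra hbne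
    have hfac : b * (r + 2 * a * s) = 0 := by nlinarith [him]
    have : r + 2 * a * s = 0 := by
      rcases mul_eq_zero.mp hfac with h | h
      · exact absurd h hbne
      · exact h
    nlinarith
  rw [hb] at hre
  nlinarith [sq_nonneg a, mul_nonneg hcon hr.le, mul_pos hs (show (0:ℝ) < 1 + a*a by nlinarith)]

end AuxLemmas

/-- The closed-loop structure matrix
`F_d = [[0, I, 0], [−I, −R_m, 0], [0, D_d, J_e − R̄_e]]` is Hurwitz whenever `R_m` is
symmetric positive definite, `J_e` is skew-symmetric, `R̄_e` is symmetric positive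
definite, and `D_d` is arbitrary. -/
theorem closedLoop_structure_hurwitz {nm ne : ℕ}
    (Rm : Matrix (Fin nm) (Fin nm) ℝ) (hRm : Rm.PosDef) (hRmsymm : Rmᵀ = Rm)
    (Je : Matrix (Fin ne) (Fin ne) ℝ) (hJe : Jeᵀ = -Je)
    (Rebar : Matrix (Fin ne) (Fin ne) ℝ) (hRe : Rebar.PosDef) (hResymm : Rebarᵀ = Rebar)
    (Dd : Matrix (Fin ne) (Fin nm) ℝ) :
    ∀ μ : ℂ, IsCharRoot
      (Matrix.fromBlocks
        (Matrix.fromBlocks (0 : Matrix (Fin nm) (Fin nm) ℝ) (1 : Matrix (Fin nm) (Fin nm) ℝ)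
          (-1 : Matrix (Fin nm) (Fin nm) ℝ) (-Rm))
        (0 : Matrix (Fin nm ⊕ Fin nm) (Fin ne) ℝ)
        (Matrix.fromCols (0 : Matrix (Fin ne) (Fin nm) ℝ) Dd)
        (Je - Rebar)) μ → μ.re < 0 := by
  intro μ hroot
  unfold IsCharRoot at hroot
  rw [Matrix.fromBlocks_map] at hroot
  rw [Matrix.map_zero _ Complex.ofReal_zero] at hroot
  rw [Matrix.charpoly_fromBlocks_zero₁₂] at hroot
  have hroot' : ((Matrix.fromBlocks (0 : Matrix (Fin nm) (Fin nm) ℝ) 1 (-1)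
        (-Rm)).map (fun x : ℝ => (x : ℂ))).charpoly.IsRoot μ
      ∨ ((Je - Rebar).map (fun x : ℝ => (x : ℂ))).charpoly.IsRoot μ := by
    simpa [Polynomial.IsRoot, Polynomial.eval_mul, mul_eq_zero] using hroot
  rcases hroot' with h | h
  · have hPmap : ((Matrix.fromBlocks (0 : Matrix (Fin nm) (Fin nm) ℝ) 1 (-1)
        (-Rm)).map (fun x : ℝ => (x : ℂ)))
        = Matrix.fromBlocks (0 : Matrix (Fin nm) (Fin nm) ℂ) 1 (-1)
          (-(Rm.map (fun x : ℝ => (x : ℂ)))) := by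
      ext i j
      rcases i with i | i <;> rcases j with j | j <;>
        simp [Matrix.map_apply, Matrix.one_apply, apply_ite (fun t : ℝ => (t : ℂ))]
    rw [hPmap] at h
    obtain ⟨v, hv, heig⟩ := exists_eigvec_of_isRoot _ μ h
    exact mech_block_re_neg Rm hRm hRmsymm μ v hv heig
  · obtain ⟨v, hv, heig⟩ := exists_eigvec_of_isRoot _ μ h
    exact diss_block_re_neg Je Rebar hJe hRe hResymm μ v hv heig
end

section
/- (Matching equation) Let M : ℝ^{n_m} → ℝ^{n_m×n_m} be C¹ with values symmetric positive definite, V : ℝ^{n_m} → ℝ and φ₁ : ℝ^{n_e} → ℝ be C¹, Γ ∈ ℝ^{n_m×n_e}, and let H_e : ℝ^{n_m}×ℝ^{n_e} → ℝ be C¹ with ∇_q H_e(q, x_e) = −Γ·∇φ₁(x_e) for all (q, x_e). Let Φ̂ : ℝ^{n_m}×ℝ^{n_e} → ℝ be any C¹ function satisfying ∇_q Φ̂(q, x_e) = Γ·∇_{x_e}Φ̂(q, x_e) for all (q, x_e). Define, on η = (q, p, x_e) ∈ ℝ^{n_m}×ℝ^{n_m}×ℝ^{n_e}, H(η) = ½·pᵀM(q)^{−1}p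 + V(q) + H_e(q, x_e) and H_d(η) = ½·pᵀM(q)^{−1}p + V(q) + Φ̂(q, x_e) + φ₁(x_e) + c₂ for a constant c₂. Then for all η: −∇_q H_d(η) + Γ·∇_{x_e} H_d(η) = −∇_q H(η). -/
open Matrix

section Aux

variable {F : Type*} [NormedAddCommGroup F] [InnerProductSpace ℝ F] [CompleteSpace F]

lemma gradient_add' {f g : F → ℝ} {x : F} (hf : DifferentiableAt ℝ f x)
    (hg : DifferentiableAt ℝ g x) :
    gradient (fun y => f y + g y) x = gradient f x + gradient g x := by
  unfold gradient
  rw [fderiv_fun_add hf hg, map_add]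

lemma gradient_add_const {f : F → ℝ} {x : F} (c : ℝ) :
    gradient (fun y => f y + c) x = gradient f x := by
  by_cases hf : DifferentiableAt ℝ f x
  · rw [gradient_add' hf (differentiableAt_const c), gradient_fun_const, add_zero]
  · rw [gradient_eq_zero_of_not_differentiableAt hf,
      gradient_eq_zero_of_not_differentiableAt]
    intro h
    exact hf (by simpa using h.add (differentiableAt_const (-c)))

lemma gradient_const_add {f : F → ℝ} {x : F} (c : ℝ) :
    gradient (fun y => c + f y) x = gradient f x := by
  simp only [add_comm c]
  exact gradient_add_const c

lemma diff_det {X : Type*} [NormedAddCommGroup X] [NormedSpace ℝ X] {k : ℕ}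
    {N : X → Matrix (Fin k) (Fin k) ℝ} {x : X}
    (h : ∀ i j, DifferentiableAt ℝ (fun x => N x i j) x) :
    DifferentiableAt ℝ (fun x => (N x).det) x := by
  simp only [Matrix.det_apply']
  exact DifferentiableAt.fun_sum fun σ _ =>
    ((HasFDerivAt.finset_prod (fun i _ => (h (σ i) i).hasFDerivAt)).differentiableAt).const_mul _

lemma diff_inv_entry {X : Type*} [NormedAddCommGroup X] [NormedSpace ℝ X] {k : ℕ}
    {N : X → Matrix (Fin k) (Fin k) ℝ} {x : X}
    (h : ∀ i j, DifferentiableAt ℝ (fun x => N x i j) x)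
    (hdet : (N x).det ≠ 0) (i j : Fin k) :
    DifferentiableAt ℝ (fun x => (N x)⁻¹ i j) x := by
  have hd : DifferentiableAt ℝ (fun x => (N x).det) x := diff_det h
  have hadj : DifferentiableAt ℝ (fun x => (N x).adjugate i j) x := by
    simp only [Matrix.adjugate_apply]
    apply diff_det
    intro i' j'
    by_cases hij : i' = j
    · subst hij
      simp only [Matrix.updateRow_self]
      exact differentiableAt_const _
    · simp only [Matrix.updateRow_ne hij]
      exact h i' j'
  have : (fun x => (N x)⁻¹ i j) = fun x => ((N x).det)⁻¹ * (N x).adjugate i j := by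
    funext x
    rw [Matrix.inv_def, Matrix.smul_apply, Ring.inverse_eq_inv', smul_eq_mul]
  rw [this]
  exact (hd.inv hdet).mul hadj

end Aux

/-- **Matching equation.** With `∇_q H_e(q,x_e) = −Γ·∇φ₁(x_e)` and any `Φ̂` satisfying
`∇_q Φ̂ = Γ·∇_{x_e} Φ̂`, the shaped energy
`H_d = ½pᵀM(q)⁻¹p + V(q) + Φ̂(q,x_e) + φ₁(x_e) + c₂` satisfies
`−∇_q H_d + Γ·∇_{x_e} H_d = −∇_q H` where `H = ½pᵀM(q)⁻¹p + V(q) + H_e(q,x_e)`. -/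
theorem matching_equation {nm ne : ℕ}
    (M : EuclideanSpace ℝ (Fin nm) → Matrix (Fin nm) (Fin nm) ℝ)
    (hM : ∀ i j, ContDiff ℝ 1 (fun q => M q i j))
    (hMsymm : ∀ q, (M q)ᵀ = M q) (hMpd : ∀ q, (M q).PosDef)
    (V : EuclideanSpace ℝ (Fin nm) → ℝ) (hV : ContDiff ℝ 1 V)
    (φ₁ : EuclideanSpace ℝ (Fin ne) → ℝ) (hφ₁ : ContDiff ℝ 1 φ₁)
    (Γ : Matrix (Fin nm) (Fin ne) ℝ)
    (He : EuclideanSpace ℝ (Fin nm) → EuclideanSpace ℝ (Fin ne) → ℝ)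
    (hHe : ContDiff ℝ 1
      (fun qx : EuclideanSpace ℝ (Fin nm) × EuclideanSpace ℝ (Fin ne) => He qx.1 qx.2))
    (hHeΓ : ∀ q xe, gradient (fun q' => He q' xe) q =
      -(Matrix.toEuclideanLin Γ (gradient φ₁ xe)))
    (Φhat : EuclideanSpace ℝ (Fin nm) → EuclideanSpace ℝ (Fin ne) → ℝ)
    (hΦhat : ContDiff ℝ 1
      (fun qx : EuclideanSpace ℝ (Fin nm) × EuclideanSpace ℝ (Fin ne) => Φhat qx.1 qx.2))
    (hΦhatΓ : ∀ q xe, gradient (fun q' => Φhat q' xe) q =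
      Matrix.toEuclideanLin Γ (gradient (fun x' => Φhat q x') xe))
    (c₂ : ℝ)
    (H Hd : EuclideanSpace ℝ (Fin nm) → EuclideanSpace ℝ (Fin nm) →
      EuclideanSpace ℝ (Fin ne) → ℝ)
    (hH : ∀ q p xe, H q p xe =
      (1 / 2 : ℝ) * (inner ℝ p (Matrix.toEuclideanLin ((M q)⁻¹) p) : ℝ) + V q + He q xe)
    (hHd : ∀ q p xe, Hd q p xe =
      (1 / 2 : ℝ) * (inner ℝ p (Matrix.toEuclideanLin ((M q)⁻¹) p) : ℝ) + V q + Φhat q xe +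
        φ₁ xe + c₂) :
    ∀ q p xe,
      -(gradient (fun q' => Hd q' p xe) q) +
        Matrix.toEuclideanLin Γ (gradient (fun x' => Hd q p x') xe) =
      -(gradient (fun q' => H q' p xe) q) := by

  intro q p xe
  have hdet : ∀ q', (M q').det ≠ 0 := fun q' => (hMpd q').det_pos.ne'
  have hMd : ∀ i j, DifferentiableAt ℝ (fun q' => M q' i j) q :=
    fun i j => (hM i j).differentiable one_ne_zero q
  -- kinetic energy as a finite sum
  have hker : ∀ B : Matrix (Fin nm) (Fin nm) ℝ,
      (inner ℝ p (Matrix.toEuclideanLin B p) : ℝ) = ∑ i, p i * ∑ j, B i j * p j := by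
    intro B
    rw [Matrix.toEuclideanLin_apply, PiLp.inner_apply]
    simp [Matrix.mulVec, dotProduct, RCLike.inner_apply]
    exact Finset.sum_congr rfl fun i _ => mul_comm _ _
  have hK : DifferentiableAt ℝ
      (fun q' => (1 / 2 : ℝ) * ∑ i, p i * ∑ j, (M q')⁻¹ i j * p j) q := by
    refine DifferentiableAt.const_mul (DifferentiableAt.fun_sum fun i _ => ?_) _
    refine DifferentiableAt.const_mul (DifferentiableAt.fun_sum fun j _ => ?_) _
    exact (diff_inv_entry hMd (hdet q) i j).mul_const _
  have hVq : DifferentiableAt ℝ V q := hV.differentiable one_ne_zero q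
  have hΦq : DifferentiableAt ℝ (fun q' => Φhat q' xe) q := by
    have := (hΦhat.differentiable one_ne_zero (q, xe)).comp (f := fun q' : EuclideanSpace ℝ (Fin nm) => (id q', xe)) q
      ((differentiableAt_id (x := q)).prodMk (differentiableAt_const xe))
    exact this
  have hHq : DifferentiableAt ℝ (fun q' => He q' xe) q := by
    have := (hHe.differentiable one_ne_zero (q, xe)).comp (f := fun q' : EuclideanSpace ℝ (Fin nm) => (id q', xe)) q
      ((differentiableAt_id (x := q)).prodMk (differentiableAt_const xe))
    exact this
  have hΦx : DifferentiableAt ℝ (fun x' => Φhat q x') xe := by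
    have := (hΦhat.differentiable one_ne_zero (q, xe)).comp xe
      ((differentiableAt_const q).prodMk differentiableAt_id)
    exact this
  have hφx : DifferentiableAt ℝ φ₁ xe := hφ₁.differentiable one_ne_zero xe
  have e1 : (fun q' => Hd q' p xe) = fun q' =>
      (((1 / 2 : ℝ) * ∑ i, p i * ∑ j, (M q')⁻¹ i j * p j + V q') + Φhat q' xe)
        + (φ₁ xe + c₂) :=
    funext fun q' => by rw [hHd, hker]; ring
  have e2 : (fun q' => H q' p xe) = fun q' =>
      ((1 / 2 : ℝ) * ∑ i, p i * ∑ j, (M q')⁻¹ i j * p j + V q') + He q' xe :=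
    funext fun q' => by rw [hH, hker]
  have e3 : (fun x' => Hd q p x') = fun x' =>
      (Φhat q x' + φ₁ x')
        + ((1 / 2 : ℝ) * (inner ℝ p (Matrix.toEuclideanLin ((M q)⁻¹) p) : ℝ) + V q + c₂) :=
    funext fun x' => by rw [hHd]; ring
  have g1 : gradient (fun q' => Hd q' p xe) q =
      (gradient (fun q' => (1 / 2 : ℝ) * ∑ i, p i * ∑ j, (M q')⁻¹ i j * p j) q
        + gradient V q) + gradient (fun q' => Φhat q' xe) q := by
    rw [e1, gradient_add_const, gradient_add' (hK.fun_add hVq) hΦq, gradient_add' hK hVq]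
  have g2 : gradient (fun q' => H q' p xe) q =
      (gradient (fun q' => (1 / 2 : ℝ) * ∑ i, p i * ∑ j, (M q')⁻¹ i j * p j) q
        + gradient V q) + gradient (fun q' => He q' xe) q := by
    rw [e2, gradient_add' (hK.fun_add hVq) hHq, gradient_add' hK hVq]
  have g3 : gradient (fun x' => Hd q p x') xe =
      gradient (fun x' => Φhat q x') xe + gradient φ₁ xe := by
    rw [e3, gradient_add_const, gradient_add' hΦx hφx]
  rw [g1, g2, g3, hΦhatΓ q xe, hHeΓ q xe, map_add]
  abel
end

section
/- Let Ψ : ℝ^{n_m} → ℝ^{n_e×n_e}, M : ℝ^{n_m} → ℝ^{n_m×n_m} with M(q) invertible, let Φ₁ : ℝ^{n_e} → ℝ be differentiable, let G_e ∈ ℝ^{n_e×n_e} be invertible, J_e ∈ ℝ^{n_e×n_e}, R_e, K_e ∈ ℝ^{n_e×n_e}, D_d ∈ ℝ^{n_e×n_m}, and set R̄_e = R_e + K_e. Define the feedback u(q, p, x_e) = G_e^{−1}·{(J_e − R̄_e)·∇Φ₁(x_e) − K_e·Ψ(q)·x_e + D_d·M(q)^{−1}·p}. Then for all (q, p, x_e):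 (J_e − R_e)·Ψ(q)·x_e + G_e·u(q, p, x_e) = D_d·M(q)^{−1}·p + (J_e − R̄_e)·(Ψ(q)·x_e + ∇Φ₁(x_e)). Consequently, the electrical equation ẋ_e = (J_e − R_e)·Ψ(q)·x_e + G_e·u of the open-loop electromechanical system becomes, in closed loop, ẋ_e = D_d·∇_p H_d + (J_e − R̄_e)·∇_{x_e} H_d with H_d(q,p,x_e) = ½pᵀM(q)^{−1}p + V(q) + ½x_eᵀΨ(q)x_e + Φ₁(x_e) + c₁. -/
open Matrix InnerProductSpace

lemma tE_mul {m n k : ℕ} (A : Matrix (Fin m) (Fin n) ℝ) (B : Matrix (Fin n) (Fin k) ℝ)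
    (x : EuclideanSpace ℝ (Fin k)) :
    Matrix.toEuclideanLin (A * B) x = Matrix.toEuclideanLin A (Matrix.toEuclideanLin B x) := by
  simp [Matrix.toEuclideanLin_apply, Matrix.mulVec_mulVec]

lemma grad_add {n : ℕ} {f f' : EuclideanSpace ℝ (Fin n) → ℝ}
    {g g' x : EuclideanSpace ℝ (Fin n)}
    (hf : HasGradientAt f g x) (hf' : HasGradientAt f' g' x) :
    HasGradientAt (fun y => f y + f' y) (g + g') x := by
  rw [hasGradientAt_iff_hasFDerivAt] at *
  rw [map_add]
  exact hf.add hf'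

lemma hasGradientAt_quad {n : ℕ} (A : Matrix (Fin n) (Fin n) ℝ) (hA : Aᵀ = A)
    (x : EuclideanSpace ℝ (Fin n)) :
    HasGradientAt (fun y => (1 / 2 : ℝ) * (inner ℝ y ((Matrix.toEuclideanLin A) y) : ℝ))
      ((Matrix.toEuclideanLin A) x) x := by
  have hAH : Aᴴ = A := by
    have h1 : Aᴴ = Aᵀ := by ext i j; simp [Matrix.conjTranspose_apply]
    rw [h1, hA]
  have hadj : ∀ (y v : EuclideanSpace ℝ (Fin n)),
      (inner ℝ y ((Matrix.toEuclideanLin A) v) : ℝ) = inner ℝ ((Matrix.toEuclideanLin A) y) v := by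
    intro y v
    rw [← LinearMap.adjoint_inner_left, ← Matrix.toEuclideanLin_conjTranspose_eq_adjoint, hAH]
  set L := (Matrix.toEuclideanLin A).toContinuousLinearMap with hLdef
  have hLa : ∀ y, L y = (Matrix.toEuclideanLin A) y := fun _ => rfl
  have h1 : HasFDerivAt (fun y : EuclideanSpace ℝ (Fin n) => (inner ℝ y (L y) : ℝ))
      ((fderivInnerCLM ℝ (x, L x)).comp ((ContinuousLinearMap.id ℝ _).prod L)) x :=
    (hasFDerivAt_id x).inner ℝ (L.hasFDerivAt)
  have h2 := h1.const_mul (1 / 2 : ℝ)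
  rw [hasGradientAt_iff_hasFDerivAt]
  convert h2 using 1
  · rfl
  · rfl
  ext v
  simp only [ContinuousLinearMap.smul_apply, ContinuousLinearMap.comp_apply,
    ContinuousLinearMap.prod_apply, ContinuousLinearMap.id_apply, fderivInnerCLM_apply,
    toDual_apply_apply, smul_eq_mul]
  rw [hLa, hLa, hadj, real_inner_comm v]
  ring


/-- **Closed-loop electrical dynamics of the regulation controller (Proposition 1).**
With the static feedback
`u = G_e⁻¹{(J_e − R̄_e)∇Φ₁(x_e) − K_e Ψ(q) x_e + D_d M(q)⁻¹ p}`, `R̄_e = R_e + K_e`,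
one has `(J_e − R_e)Ψ(q)x_e + G_e u = D_d M(q)⁻¹p + (J_e − R̄_e)(Ψ(q)x_e + ∇Φ₁(x_e))`;
consequently the open-loop electrical equation `ẋ_e = (J_e − R_e)Ψ(q)x_e + G_e u` becomes
`ẋ_e = D_d ∇_p H_d + (J_e − R̄_e) ∇_{x_e} H_d` for
`H_d(q,p,x_e) = ½pᵀM(q)⁻¹p + V(q) + ½x_eᵀΨ(q)x_e + Φ₁(x_e) + c₁`. -/
theorem regulation_controller_closed_loop {nm ne : ℕ}
    (Ψ : EuclideanSpace ℝ (Fin nm) → Matrix (Fin ne) (Fin ne) ℝ)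
    (hΨsymm : ∀ q, (Ψ q)ᵀ = Ψ q)
    (M : EuclideanSpace ℝ (Fin nm) → Matrix (Fin nm) (Fin nm) ℝ)
    (hMsymm : ∀ q, (M q)ᵀ = M q) (hMinv : ∀ q, IsUnit (M q).det)
    (V : EuclideanSpace ℝ (Fin nm) → ℝ)
    (Φ₁ : EuclideanSpace ℝ (Fin ne) → ℝ) (hΦ₁ : Differentiable ℝ Φ₁)
    (Ge : Matrix (Fin ne) (Fin ne) ℝ) (hGe : IsUnit Ge.det)
    (Je Re Ke : Matrix (Fin ne) (Fin ne) ℝ)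
    (Rebar : Matrix (Fin ne) (Fin ne) ℝ) (hRebar : Rebar = Re + Ke)
    (Dd : Matrix (Fin ne) (Fin nm) ℝ) (c₁ : ℝ)
    (u : EuclideanSpace ℝ (Fin nm) → EuclideanSpace ℝ (Fin nm) →
      EuclideanSpace ℝ (Fin ne) → EuclideanSpace ℝ (Fin ne))
    (hu : ∀ q p xe, u q p xe =
      Matrix.toEuclideanLin Ge⁻¹
        (Matrix.toEuclideanLin (Je - Rebar) (gradient Φ₁ xe) -
          Matrix.toEuclideanLin Ke (Matrix.toEuclideanLin (Ψ q) xe) +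
          Matrix.toEuclideanLin Dd (Matrix.toEuclideanLin ((M q)⁻¹) p)))
    (Hd : EuclideanSpace ℝ (Fin nm) → EuclideanSpace ℝ (Fin nm) →
      EuclideanSpace ℝ (Fin ne) → ℝ)
    (hHd : ∀ q p xe, Hd q p xe =
      (1 / 2 : ℝ) * (inner ℝ p (Matrix.toEuclideanLin ((M q)⁻¹) p) : ℝ) + V q +
        (1 / 2 : ℝ) * (inner ℝ xe (Matrix.toEuclideanLin (Ψ q) xe) : ℝ) + Φ₁ xe + c₁) :
    (∀ q p xe,
      Matrix.toEuclideanLin ((Je - Re) * Ψ q) xe + Matrix.toEuclideanLin Ge (u q p xe) =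
        Matrix.toEuclideanLin Dd (Matrix.toEuclideanLin ((M q)⁻¹) p) +
          Matrix.toEuclideanLin (Je - Rebar)
            (Matrix.toEuclideanLin (Ψ q) xe + gradient Φ₁ xe)) ∧
    (∀ (qc pc : ℝ → EuclideanSpace ℝ (Fin nm)) (xc : ℝ → EuclideanSpace ℝ (Fin ne)) (t : ℝ),
      HasDerivAt xc
        (Matrix.toEuclideanLin ((Je - Re) * Ψ (qc t)) (xc t) +
          Matrix.toEuclideanLin Ge (u (qc t) (pc t) (xc t))) t →
      HasDerivAt xc
        (Matrix.toEuclideanLin Dd (gradient (fun p' => Hd (qc t) p' (xc t)) (pc t)) +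
          Matrix.toEuclideanLin (Je - Rebar)
            (gradient (fun x' => Hd (qc t) (pc t) x') (xc t))) t) := by
  have key : ∀ q p xe,
      Matrix.toEuclideanLin ((Je - Re) * Ψ q) xe + Matrix.toEuclideanLin Ge (u q p xe) =
        Matrix.toEuclideanLin Dd (Matrix.toEuclideanLin ((M q)⁻¹) p) +
          Matrix.toEuclideanLin (Je - Rebar)
            (Matrix.toEuclideanLin (Ψ q) xe + gradient Φ₁ xe) := by
    intro q p xe
    have hGeInv : ∀ y, Matrix.toEuclideanLin Ge (Matrix.toEuclideanLin Ge⁻¹ y) = y := by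
      intro y
      rw [← tE_mul, Matrix.mul_nonsing_inv _ hGe]
      simp [Matrix.toEuclideanLin_apply, Matrix.one_mulVec]
    rw [hu, hGeInv]
    simp only [hRebar, tE_mul, map_sub, map_add, LinearMap.sub_apply, LinearMap.add_apply]
    abel
  refine ⟨key, ?_⟩
  intro qc pc xc t h
  have hMinvSymm : ((M (qc t))⁻¹)ᵀ = (M (qc t))⁻¹ := by
    rw [Matrix.transpose_nonsing_inv, hMsymm]
  have hgp : gradient (fun p' => Hd (qc t) p' (xc t)) (pc t) =
      Matrix.toEuclideanLin ((M (qc t))⁻¹) (pc t) := by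
    have hg : HasGradientAt (fun p' => Hd (qc t) p' (xc t))
        ((((Matrix.toEuclideanLin ((M (qc t))⁻¹) (pc t) + 0) + 0) + 0) + 0) (pc t) := by
      simp only [hHd]
      exact grad_add (grad_add (grad_add (grad_add
        (hasGradientAt_quad _ hMinvSymm (pc t)) (hasGradientAt_const _ _))
        (hasGradientAt_const _ _)) (hasGradientAt_const _ _)) (hasGradientAt_const _ _)
    simpa using hg.gradient
  have hgx : gradient (fun x' => Hd (qc t) (pc t) x') (xc t) =
      Matrix.toEuclideanLin (Ψ (qc t)) (xc t) + gradient Φ₁ (xc t) := by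
    have hg : HasGradientAt (fun x' => Hd (qc t) (pc t) x')
        (((0 + Matrix.toEuclideanLin (Ψ (qc t)) (xc t)) + gradient Φ₁ (xc t)) + 0) (xc t) := by
      simp only [hHd]
      exact grad_add (grad_add (grad_add (hasGradientAt_const _ _)
        (hasGradientAt_quad _ (hΨsymm _) (xc t)))
        ((hΦ₁ (xc t)).hasGradientAt)) (hasGradientAt_const _ _)
    simpa using hg.gradient
  rw [hgp, hgx, ← key (qc t) (pc t) (xc t)]
  exact h
end

section
/- Let Ψ : ℝ^{n_m} → ℝ^{n_e×n_e}, M : ℝ^{n_m} → ℝ^{n_m×n_m} with M(q) invertible, φ₁ : ℝ^{n_e} → ℝ and Φ₂ : ℝ^{n_e} → ℝ differentiable, G_e ∈ ℝ^{n_e×n_e} invertible, J_e, R_e, K_e ∈ ℝ^{n_e×n_e} with R̄_e = R_e + K_e and J_e − R̄_e invertible, Γ ∈ ℝ^{n_m×n_e}, D_d ∈ ℝ^{n_e×n_m}. Define z(q, x_e) = −G_eᵀ·(J_e − R̄_e)^{−ᵀ}·(Γᵀq + x_e), Φ̂₂(q, x_e) = Φ₂(z(q, x_e)), and the feedback u(q,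 p, x_e) = G_e^{−1}·{(R_e − J_e)·Ψ(q)·x_e + (D_d − Γᵀ)·M(q)^{−1}·p + (J_e − R̄_e)·∇φ₁(x_e)} − ∇Φ₂(z(q, x_e)). Then for all (q, p, x_e): (J_e − R_e)·Ψ(q)·x_e + G_e·u(q, p, x_e) = (−Γᵀ + D_d)·M(q)^{−1}·p + (J_e − R̄_e)·(∇φ₁(x_e) + ∇_{x_e}Φ̂₂(q, x_e)). -/
open Matrix
lemma gradient_comp_affine {n : ℕ} (Φ : EuclideanSpace ℝ (Fin n) → ℝ)
    (hΦ : Differentiable ℝ Φ) (C : Matrix (Fin n) (Fin n) ℝ)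
    (c xe : EuclideanSpace ℝ (Fin n)) :
    gradient (fun x => Φ (c + Matrix.toEuclideanLin C x)) xe =
      Matrix.toEuclideanLin Cᵀ (gradient Φ (c + Matrix.toEuclideanLin C xe)) := by
  set T : EuclideanSpace ℝ (Fin n) →L[ℝ] EuclideanSpace ℝ (Fin n) :=
    LinearMap.toContinuousLinearMap (Matrix.toEuclideanLin C) with hTdef
  set y := c + Matrix.toEuclideanLin C xe with hy
  have hg : HasGradientAt Φ (gradient Φ y) y := (hΦ y).hasGradientAt
  have h1 : HasFDerivAt (fun x => c + Matrix.toEuclideanLin C x) T xe := by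
    exact (T.hasFDerivAt).const_add c
  have hfd : HasFDerivAt (fun x => Φ (c + Matrix.toEuclideanLin C x))
      ((InnerProductSpace.toDual ℝ _ (gradient Φ y)).comp T) xe :=
    (hg.hasFDerivAt).comp xe h1
  have key : (InnerProductSpace.toDual ℝ (EuclideanSpace ℝ (Fin n)))
      (Matrix.toEuclideanLin Cᵀ (gradient Φ y)) =
      (InnerProductSpace.toDual ℝ _ (gradient Φ y)).comp T := by
    ext v
    simp only [InnerProductSpace.toDual_apply_apply, ContinuousLinearMap.coe_comp',
      Function.comp_apply]
    rw [← Matrix.conjTranspose_eq_transpose_of_trivial,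
      Matrix.toEuclideanLin_conjTranspose_eq_adjoint]
    exact LinearMap.adjoint_inner_left _ _ _
  have : HasGradientAt (fun x => Φ (c + Matrix.toEuclideanLin C x))
      (Matrix.toEuclideanLin Cᵀ (gradient Φ y)) xe := by
    rw [hasGradientAt_iff_hasFDerivAt, key]; exact hfd
  exact this.gradient


/-- **Closed-loop electrical dynamics of the controller of Proposition 2.**
With `z(q,x_e) = −G_eᵀ(J_e − R̄_e)^{−ᵀ}(Γᵀq + x_e)`, `Φ̂₂(q,x_e) = Φ₂(z(q,x_e))`, and
`u = G_e⁻¹{(R_e − J_e)Ψ(q)x_e + (D_d − Γᵀ)M(q)⁻¹p + (J_e − R̄_e)∇φ₁(x_e)} − ∇Φ₂(z(q,x_e))`,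
one has
`(J_e − R_e)Ψ(q)x_e + G_e u = (−Γᵀ + D_d)M(q)⁻¹p + (J_e − R̄_e)(∇φ₁(x_e) + ∇_{x_e}Φ̂₂(q,x_e))`. -/
theorem proposition2_controller_closed_loop {nm ne : ℕ}
    (Ψ : EuclideanSpace ℝ (Fin nm) → Matrix (Fin ne) (Fin ne) ℝ)
    (M : EuclideanSpace ℝ (Fin nm) → Matrix (Fin nm) (Fin nm) ℝ)
    (hMinv : ∀ q, IsUnit (M q).det)
    (φ₁ : EuclideanSpace ℝ (Fin ne) → ℝ) (hφ₁ : Differentiable ℝ φ₁)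
    (Φ₂ : EuclideanSpace ℝ (Fin ne) → ℝ) (hΦ₂ : Differentiable ℝ Φ₂)
    (Ge : Matrix (Fin ne) (Fin ne) ℝ) (hGe : IsUnit Ge.det)
    (Je Re Ke : Matrix (Fin ne) (Fin ne) ℝ)
    (Rebar : Matrix (Fin ne) (Fin ne) ℝ) (hRebar : Rebar = Re + Ke)
    (hJR : IsUnit (Je - Rebar).det)
    (Γ : Matrix (Fin nm) (Fin ne) ℝ)
    (Dd : Matrix (Fin ne) (Fin nm) ℝ)
    (z : EuclideanSpace ℝ (Fin nm) → EuclideanSpace ℝ (Fin ne) → EuclideanSpace ℝ (Fin ne))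
    (hz : ∀ q xe, z q xe =
      -(Matrix.toEuclideanLin (Geᵀ * ((Je - Rebar)⁻¹)ᵀ)
          (Matrix.toEuclideanLin Γᵀ q + xe)))
    (u : EuclideanSpace ℝ (Fin nm) → EuclideanSpace ℝ (Fin nm) →
      EuclideanSpace ℝ (Fin ne) → EuclideanSpace ℝ (Fin ne))
    (hu : ∀ q p xe, u q p xe =
      Matrix.toEuclideanLin Ge⁻¹
        (Matrix.toEuclideanLin ((Re - Je) * Ψ q) xe +
          Matrix.toEuclideanLin ((Dd - Γᵀ) * (M q)⁻¹) p +
          Matrix.toEuclideanLin (Je - Rebar) (gradient φ₁ xe)) -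
      gradient Φ₂ (z q xe)) :
    ∀ q p xe,
      Matrix.toEuclideanLin ((Je - Re) * Ψ q) xe + Matrix.toEuclideanLin Ge (u q p xe) =
        Matrix.toEuclideanLin ((-Γᵀ + Dd) * (M q)⁻¹) p +
          Matrix.toEuclideanLin (Je - Rebar)
            (gradient φ₁ xe + gradient (fun x' => Φ₂ (z q x')) xe) := by
  intro q p xe
  set A := Geᵀ * ((Je - Rebar)⁻¹)ᵀ with hA
  set c : EuclideanSpace ℝ (Fin ne) :=
    -(Matrix.toEuclideanLin A (Matrix.toEuclideanLin Γᵀ q)) with hc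
  have hzq : ∀ x' : EuclideanSpace ℝ (Fin ne),
      z q x' = c + Matrix.toEuclideanLin (-A) x' := by
    intro x'
    rw [hz, map_add, neg_add, hc, map_neg]
    rfl
  have hfun : (fun x' => Φ₂ (z q x')) =
      (fun x => Φ₂ (c + Matrix.toEuclideanLin (-A) x)) := by
    funext x'; rw [hzq]
  have hgrad : gradient (fun x' => Φ₂ (z q x')) xe =
      Matrix.toEuclideanLin (-A)ᵀ (gradient Φ₂ (z q xe)) := by
    rw [hfun, gradient_comp_affine Φ₂ hΦ₂ (-A) c xe, ← hzq]
  have hmat : (Je - Rebar) * (-A)ᵀ = -Ge := by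
    rw [hA, transpose_neg, transpose_mul, transpose_transpose, transpose_transpose,
      mul_neg, ← mul_assoc, Matrix.mul_nonsing_inv _ hJR, one_mul]
  rw [hu, hgrad]
  apply (WithLp.equiv 2 (Fin ne → ℝ)).injective
  set g1 := (WithLp.equiv 2 (Fin ne → ℝ)) (gradient φ₁ xe) with hg1
  set g2 := (WithLp.equiv 2 (Fin ne → ℝ)) (gradient Φ₂ (z q xe)) with hg2
  set P := (WithLp.equiv 2 (Fin nm → ℝ)) p with hP
  set X := (WithLp.equiv 2 (Fin ne → ℝ)) xe with hX
  simp only [WithLp.equiv_apply, WithLp.ofLp_add, WithLp.ofLp_sub, Matrix.ofLp_toEuclideanLin_apply] at hg1 hg2 hP hX ⊢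
  simp only [← hg1, ← hg2, ← hP, ← hX]
  rw [Matrix.mulVec_sub, Matrix.mulVec_mulVec, Matrix.mul_nonsing_inv _ hGe, Matrix.one_mulVec,
    Matrix.mulVec_add, Matrix.mulVec_mulVec, hmat]
  have h1 : (Je - Re) * Ψ q = -((Re - Je) * Ψ q) := by noncomm_ring
  have h2 : (Dd - Γᵀ) = (-Γᵀ + Dd) := by abel
  rw [h1, h2, Matrix.neg_mulVec, Matrix.neg_mulVec]
  abel
end

section
/- (Global version of the contraction-region lemma) Let F_d be a constant real n×n matrix, H_d : ℝⁿ × [0,∞) → ℝ be C² in x, and ω a constant invertible real n×n matrix. Suppose there is a constant σ > 0 such that for all x ∈ ℝⁿ and t ≥ 0: ω·F_d·∇²ₓH_d(x,t)·ω^{−1} + ω^{−ᵀ}·∇²ₓH_d(x,t)·F_dᵀ·ωᵀ ⪯ −σ·I. Then for any two C¹ solutions x₁, x₂ : [0,∞) → ℝⁿ of ẋ = F_d·∇H_d(x,t), one has ‖ω·(x₁(t) − x₂(t))‖ ≤ e^{−σt/2}·‖ω·(x₁(0) − x₂(0))‖ for all t ≥ 0; in particular all trajectories converge exponentially together with rate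 σ/2 in the metric Ω = ωᵀω. -/
open Matrix

noncomputable section

/-- The Hessian matrix of `f : EuclideanSpace ℝ ι → ℝ` at `x`. -/
def hessianMatrix {ι : Type*} [Fintype ι] [DecidableEq ι]
    (f : EuclideanSpace ℝ ι → ℝ) (x : EuclideanSpace ℝ ι) : Matrix ι ι ℝ :=
  Matrix.of fun a b =>
    iteratedFDeriv ℝ 2 f x ![EuclideanSpace.single a 1, EuclideanSpace.single b 1]

open RealInnerProductSpace

section aux

variable {n : ℕ}

lemma toEuclideanLin_eq (M : Matrix (Fin n) (Fin n) ℝ) (x : EuclideanSpace ℝ (Fin n)) :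
    Matrix.toEuclideanLin M x = M *ᵥ x := rfl

lemma euclid_inner_eq_dot (x y : EuclideanSpace ℝ (Fin n)) :
    ⟪x, y⟫ = x ⬝ᵥ y := by
  simp [PiLp.inner_apply, dotProduct, mul_comm]

lemma mulVec_dot (A : Matrix (Fin n) (Fin n) ℝ) (x y : Fin n → ℝ) :
    (A *ᵥ x) ⬝ᵥ y = x ⬝ᵥ (Aᵀ *ᵥ y) := by
  rw [dotProduct_comm, dotProduct_mulVec, ← mulVec_transpose, dotProduct_comm]

lemma euclid_sum_single (x : EuclideanSpace ℝ (Fin n)) :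
    x = ∑ i, x i • EuclideanSpace.single i (1 : ℝ) := by
  ext j
  have : (∑ i, x i • EuclideanSpace.single i (1:ℝ)) j
      = ∑ i, (x i • EuclideanSpace.single i (1:ℝ)) j := by
    simp [Pi.single_apply]
  rw [this]
  simp [EuclideanSpace.single_apply]

lemma hessianMatrix_apply (g : EuclideanSpace ℝ (Fin n) → ℝ) (x : EuclideanSpace ℝ (Fin n))
    (i j : Fin n) :
    hessianMatrix g x i j =
      fderiv ℝ (fderiv ℝ g) x (EuclideanSpace.single i 1) (EuclideanSpace.single j 1) := by
  simp [hessianMatrix, iteratedFDeriv_two_apply]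

lemma hess_bilin (g : EuclideanSpace ℝ (Fin n) → ℝ) (x e w : EuclideanSpace ℝ (Fin n)) :
    fderiv ℝ (fderiv ℝ g) x e w = e ⬝ᵥ (hessianMatrix g x) *ᵥ w := by
  conv_lhs => rw [euclid_sum_single e, euclid_sum_single w]
  rw [map_sum]
  simp only [_root_.map_smul, ContinuousLinearMap.coe_sum', ContinuousLinearMap.coe_smul',
    Finset.sum_apply, Pi.smul_apply, map_sum, _root_.map_smul, smul_eq_mul]
  simp only [dotProduct, mulVec, hessianMatrix_apply, Finset.mul_sum]
  rw [Finset.sum_comm]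
  exact Finset.sum_congr rfl fun i _ => Finset.sum_congr rfl fun j _ => by ring

lemma hess_symm {g : EuclideanSpace ℝ (Fin n) → ℝ} (hg : ContDiff ℝ 2 g)
    (x : EuclideanSpace ℝ (Fin n)) :
    (hessianMatrix g x)ᵀ = hessianMatrix g x := by
  have h := hg.contDiffAt (x := x) |>.isSymmSndFDerivAt (by simp)
  ext i j
  rw [transpose_apply, hessianMatrix_apply, hessianMatrix_apply]
  exact h _ _

lemma quad_bound {σ : ℝ} {N : Matrix (Fin n) (Fin n) ℝ}
    (h : ((-σ) • (1 : Matrix (Fin n) (Fin n) ℝ) - (Nᵀ + N)).PosSemidef) (u : Fin n → ℝ) :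
    u ⬝ᵥ N *ᵥ u ≤ -(σ/2) * (u ⬝ᵥ u) := by
  have h2 := h.dotProduct_mulVec_nonneg u
  simp only [star_trivial] at h2
  have htr : u ⬝ᵥ Nᵀ *ᵥ u = u ⬝ᵥ N *ᵥ u := by
    rw [dotProduct_mulVec, vecMul_transpose, dotProduct_comm]
  rw [sub_mulVec, add_mulVec, smul_mulVec, one_mulVec, dotProduct_sub, dotProduct_add,
    dotProduct_smul, htr] at h2
  simp only [smul_eq_mul] at h2
  linarith

end aux

section key

variable {n : ℕ}

lemma grad_inner (g : EuclideanSpace ℝ (Fin n) → ℝ) (y w : EuclideanSpace ℝ (Fin n)) :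
    ⟪gradient g y, w⟫ = fderiv ℝ g y w := by
  simp [gradient, InnerProductSpace.toDual_symm_apply]

lemma key_ineq (Fd ω : Matrix (Fin n) (Fin n) ℝ) (hω : IsUnit ω.det) (σ : ℝ)
    (g : EuclideanSpace ℝ (Fin n) → ℝ) (hg : ContDiff ℝ 2 g)
    (hc : ∀ x : EuclideanSpace ℝ (Fin n),
      ((-σ) • (1 : Matrix (Fin n) (Fin n) ℝ) -
        (ω * Fd * hessianMatrix g x * ω⁻¹ +
          (ω⁻¹)ᵀ * hessianMatrix g x * Fdᵀ * ωᵀ)).PosSemidef)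
    (a b : EuclideanSpace ℝ (Fin n)) :
    ⟪Matrix.toEuclideanLin ω
        (Matrix.toEuclideanLin Fd (gradient g a) - Matrix.toEuclideanLin Fd (gradient g b)),
      Matrix.toEuclideanLin ω (a - b)⟫ ≤
      -(σ/2) * ‖Matrix.toEuclideanLin ω (a - b)‖^2 := by
  set e : EuclideanSpace ℝ (Fin n) := a - b with he
  set u : Fin n → ℝ := ω *ᵥ e with hu
  set w : Fin n → ℝ := Fdᵀ *ᵥ (ωᵀ *ᵥ u) with hw
  -- dot product reformulation of the LHS
  have hdual : ∀ G : Fin n → ℝ, (ω *ᵥ (Fd *ᵥ G)) ⬝ᵥ u = G ⬝ᵥ w := by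
    intro G
    rw [mulVec_dot, mulVec_dot, hw]
  -- derivative of φ
  have hD : Differentiable ℝ (fderiv ℝ g) :=
    (hg.fderiv_right (m := 1) (by norm_num)).differentiable (by norm_num)
  set φ : ℝ → ℝ := fun s => fderiv ℝ g (b + s • e) (WithLp.toLp 2 w : EuclideanSpace ℝ (Fin n))
    with hφdef
  have hφ : ∀ s : ℝ, HasDerivAt φ
      (e ⬝ᵥ (hessianMatrix g (b + s • e)) *ᵥ w) s := by
    intro s
    have hcderiv : HasDerivAt (fun s : ℝ => b + s • e) e s := by
      have := ((hasDerivAt_id s).smul_const e).const_add b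
      simpa using this
    have hF : HasFDerivAt (fderiv ℝ g) (fderiv ℝ (fderiv ℝ g) (b + s • e)) (b + s • e) :=
      (hD _).hasFDerivAt
    have hcomp := hF.comp_hasDerivAt s hcderiv
    have happ := hcomp.clm_apply (hasDerivAt_const s (WithLp.toLp 2 w : EuclideanSpace ℝ (Fin n)))
    have : HasDerivAt φ (fderiv ℝ (fderiv ℝ g) (b + s • e) e
        (WithLp.toLp 2 w : EuclideanSpace ℝ (Fin n))) s := by
      simpa [hφdef, Function.comp] using happ
    rwa [hess_bilin] at this
  -- bound on the derivative
  have hueq : (ω⁻¹ : Matrix (Fin n) (Fin n) ℝ) *ᵥ u = e := by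
    rw [hu, mulVec_mulVec, Matrix.nonsing_inv_mul ω hω, one_mulVec]
  have hφ' : ∀ s : ℝ, e ⬝ᵥ (hessianMatrix g (b + s • e)) *ᵥ w ≤ -(σ/2) * (u ⬝ᵥ u) := by
    intro s
    set H := hessianMatrix g (b + s • e) with hH
    have h1 : e ⬝ᵥ H *ᵥ w = u ⬝ᵥ ((ω⁻¹)ᵀ * H * Fdᵀ * ωᵀ) *ᵥ u := by
      rw [← hueq, mulVec_dot, hw, mulVec_mulVec, mulVec_mulVec, mulVec_mulVec,
        Matrix.mul_assoc, Matrix.mul_assoc]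
    have hNT : ((ω⁻¹)ᵀ * H * Fdᵀ * ωᵀ)ᵀ = ω * Fd * H * ω⁻¹ := by
      simp only [Matrix.transpose_mul, Matrix.transpose_transpose]
      rw [show Hᵀ = H from hess_symm hg _]
      noncomm_ring
    have hpsd := hc (b + s • e)
    rw [← hNT] at hpsd
    rw [h1]
    exact quad_bound hpsd u
  -- mean value argument
  have hmv : φ 1 - φ 0 ≤ -(σ/2) * (u ⬝ᵥ u) := by
    have hanti : Antitone (fun s => φ s - (-(σ/2) * (u ⬝ᵥ u)) * s) := by
      apply antitone_of_hasDerivAt_nonpos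
        (f' := fun s => e ⬝ᵥ (hessianMatrix g (b + s • e)) *ᵥ w - (-(σ/2) * (u ⬝ᵥ u)))
      · intro s
        simpa [Pi.sub_def] using (hφ s).sub ((hasDerivAt_id s).const_mul (-(σ/2) * (u ⬝ᵥ u)))
      · intro s
        simp only [Pi.zero_apply, sub_nonpos]
        exact hφ' s
    have := hanti (by norm_num : (0:ℝ) ≤ 1)
    simp only [mul_one, mul_zero, sub_zero] at this
    linarith
  -- conclude
  have hφ1 : φ 1 = (gradient g a : EuclideanSpace ℝ (Fin n)) ⬝ᵥ w := by
    rw [hφdef]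
    simp only [one_smul, he]
    rw [show b + (a - b) = a by abel, ← grad_inner, euclid_inner_eq_dot]
  have hφ0 : φ 0 = (gradient g b : EuclideanSpace ℝ (Fin n)) ⬝ᵥ w := by
    rw [hφdef]
    simp only [zero_smul, add_zero]
    rw [← grad_inner, euclid_inner_eq_dot]
  have hsub : Matrix.toEuclideanLin Fd (gradient g a) - Matrix.toEuclideanLin Fd (gradient g b)
      = Matrix.toEuclideanLin Fd (gradient g a - gradient g b) := (map_sub _ _ _).symm
  have hLHS : ⟪Matrix.toEuclideanLin ω
        (Matrix.toEuclideanLin Fd (gradient g a) - Matrix.toEuclideanLin Fd (gradient g b)),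
      Matrix.toEuclideanLin ω e⟫ = φ 1 - φ 0 := by
    rw [euclid_inner_eq_dot, hsub, toEuclideanLin_eq, toEuclideanLin_eq, toEuclideanLin_eq,
      ← hu, hdual, WithLp.ofLp_sub, sub_dotProduct, hφ1, hφ0]
  have hnorm : ‖Matrix.toEuclideanLin ω e‖^2 = u ⬝ᵥ u := by
    rw [← real_inner_self_eq_norm_sq, euclid_inner_eq_dot, toEuclideanLin_eq, ← hu]
  rw [hLHS, hnorm]
  exact hmv

end key

/-- **Global contraction-region lemma.** If, uniformly in `x` and `t ≥ 0`,
`ωF_d∇²ₓH_dω⁻¹ + ω⁻ᵀ∇²ₓH_dF_dᵀωᵀ ⪯ −σI` for a constant invertible `ω` and a constant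
`σ > 0`, then any two solutions of `ẋ = F_d∇H_d(x,t)` satisfy
`‖ω(x₁(t) − x₂(t))‖ ≤ e^{−σt/2}‖ω(x₁(0) − x₂(0))‖`. -/
theorem global_contraction_region {n : ℕ}
    (Fd : Matrix (Fin n) (Fin n) ℝ)
    (Hd : EuclideanSpace ℝ (Fin n) → ℝ → ℝ)
    (hHdC2 : ∀ t : ℝ, 0 ≤ t → ContDiff ℝ 2 (fun x => Hd x t))
    (ω : Matrix (Fin n) (Fin n) ℝ) (hω : IsUnit ω.det)
    (σ : ℝ) (hσ : 0 < σ)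
    (hcontr : ∀ (x : EuclideanSpace ℝ (Fin n)) (t : ℝ), 0 ≤ t →
      ((-σ) • (1 : Matrix (Fin n) (Fin n) ℝ) -
        (ω * Fd * hessianMatrix (fun y => Hd y t) x * ω⁻¹ +
          (ω⁻¹)ᵀ * hessianMatrix (fun y => Hd y t) x * Fdᵀ * ωᵀ)).PosSemidef) :
    ∀ x₁ x₂ : ℝ → EuclideanSpace ℝ (Fin n),
      (∀ t ∈ Set.Ici (0 : ℝ), HasDerivWithinAt x₁
        (Matrix.toEuclideanLin Fd (gradient (fun y => Hd y t) (x₁ t))) (Set.Ici 0) t) →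
      (∀ t ∈ Set.Ici (0 : ℝ), HasDerivWithinAt x₂
        (Matrix.toEuclideanLin Fd (gradient (fun y => Hd y t) (x₂ t))) (Set.Ici 0) t) →
      ∀ t ∈ Set.Ici (0 : ℝ),
        ‖Matrix.toEuclideanLin ω (x₁ t - x₂ t)‖ ≤
          Real.exp (-σ * t / 2) * ‖Matrix.toEuclideanLin ω (x₁ 0 - x₂ 0)‖ := by
  intro x₁ x₂ h1 h2 t ht
  set T : EuclideanSpace ℝ (Fin n) →L[ℝ] EuclideanSpace ℝ (Fin n) :=
    LinearMap.toContinuousLinearMap (Matrix.toEuclideanLin ω) with hT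
  set y : ℝ → EuclideanSpace ℝ (Fin n) := fun s => Matrix.toEuclideanLin ω (x₁ s - x₂ s) with hy
  set yd : ℝ → EuclideanSpace ℝ (Fin n) := fun s => Matrix.toEuclideanLin ω
      (Matrix.toEuclideanLin Fd (gradient (fun z => Hd z s) (x₁ s)) -
        Matrix.toEuclideanLin Fd (gradient (fun z => Hd z s) (x₂ s))) with hyd
  have hyderiv : ∀ s ∈ Set.Ici (0:ℝ), HasDerivWithinAt y (yd s) (Set.Ici 0) s := by
    intro s hs
    have hd := (h1 s hs).sub (h2 s hs)
    have := T.hasFDerivAt.comp_hasDerivWithinAt s hd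
    simp only [hT, Function.comp, LinearMap.coe_toContinuousLinearMap'] at this
    exact this
  set f : ℝ → ℝ := fun s => Real.exp (σ * s) * ⟪y s, y s⟫ with hfdef
  set F' : ℝ → ℝ := fun s => Real.exp (σ * s) * σ * ⟪y s, y s⟫ +
      Real.exp (σ * s) * (⟪y s, yd s⟫ + ⟪yd s, y s⟫) with hF'def
  have hf : ∀ s ∈ Set.Ici (0:ℝ), HasDerivWithinAt f (F' s) (Set.Ici 0) s := by
    intro s hs
    have hexp : HasDerivAt (fun r : ℝ => Real.exp (σ * r)) (Real.exp (σ * s) * σ) s := by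
      have := (Real.hasDerivAt_exp (σ * s)).comp s ((hasDerivAt_id s).const_mul σ)
      simpa [Function.comp_def, mul_comm] using this
    have hin := (hyderiv s hs).inner ℝ (hyderiv s hs)
    simpa [hfdef, hF'def, Pi.mul_def] using hexp.hasDerivWithinAt.mul hin
  have hF'nonpos : ∀ s ∈ Set.Ici (0:ℝ), F' s ≤ 0 := by
    intro s hs
    have hk := key_ineq Fd ω hω σ (fun z => Hd z s) (hHdC2 s hs)
      (fun x => hcontr x s hs) (x₁ s) (x₂ s)
    have hkk : ⟪yd s, y s⟫ ≤ -(σ/2) * ‖y s‖^2 := hk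
    have hexppos := Real.exp_pos (σ * s)
    have heq : F' s = Real.exp (σ * s) * (σ * ‖y s‖^2 + 2 * ⟪yd s, y s⟫) := by
      rw [hF'def]
      simp only [real_inner_comm (y s) (yd s), real_inner_self_eq_norm_sq]
      ring
    rw [heq]
    apply mul_nonpos_of_nonneg_of_nonpos hexppos.le
    nlinarith [norm_nonneg (y s)]
  have hanti : AntitoneOn f (Set.Ici (0:ℝ)) := by
    apply antitoneOn_of_hasDerivWithinAt_nonpos (convex_Ici 0)
      (fun s hs => (hf s hs).continuousWithinAt)
      (f' := F')
    · intro s hs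
      exact (hf s (interior_subset hs)).mono interior_subset
    · intro s hs
      exact hF'nonpos s (interior_subset hs)
  have hft : f t ≤ f 0 := hanti Set.self_mem_Ici ht ht
  have hf0 : f 0 = ‖y 0‖^2 := by
    show Real.exp (σ * 0) * ⟪y 0, y 0⟫ = _
    rw [real_inner_self_eq_norm_sq]
    simp
  have hftt : f t = Real.exp (σ * t) * ‖y t‖^2 := by
    show Real.exp (σ * t) * ⟪y t, y t⟫ = _
    rw [real_inner_self_eq_norm_sq]
  have hsq : Real.exp (σ * t) * ‖y t‖^2 ≤ ‖y 0‖^2 := by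
    calc Real.exp (σ * t) * ‖y t‖^2 = f t := hftt.symm
      _ ≤ f 0 := hft
      _ = ‖y 0‖^2 := hf0
  have hexppos := Real.exp_pos (σ * t)
  have hsq2 : ‖y t‖^2 ≤ (Real.exp (-σ * t / 2) * ‖y 0‖)^2 := by
    have h2 : (Real.exp (-σ * t / 2))^2 = (Real.exp (σ * t))⁻¹ := by
      rw [← Real.exp_neg]
      rw [sq, ← Real.exp_add]
      ring_nf
    rw [mul_pow, h2, inv_mul_eq_div, le_div_iff₀ hexppos]
    linarith [hsq]
  have h0 : (0:ℝ) ≤ Real.exp (-σ * t / 2) * ‖y 0‖ := by positivity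
  calc ‖y t‖ = √(‖y t‖^2) := (Real.sqrt_sq (norm_nonneg _)).symm
    _ ≤ √((Real.exp (-σ * t / 2) * ‖y 0‖)^2) := Real.sqrt_le_sqrt hsq2
    _ = Real.exp (-σ * t / 2) * ‖y 0‖ := Real.sqrt_sq h0
end
end

section
/- Let F ∈ ℝ^{n×n}, let H ∈ ℝ^{n×n} be symmetric with α·I ≺ H ≺ β·I for constants 0 < α < β, let ω ∈ ℝ^{n×n} be invertible with Ω = ωᵀω, set γ = 1 − α/β, and suppose that for some ε > 0 the algebraic Riccati equation Ω·F + Fᵀ·Ω + (γ + ε)·I + γ·Ω·F·Fᵀ·Ω = 0 holds. Then ω·F·H·ω^{−1} + ω^{−ᵀ}·H·Fᵀ·ωᵀ ⪯ −β·ε·ω^{−ᵀ}·ω^{−1}, and consequently there exists σ > 0 (one may take σ = β·ε times the smallest eigenvalue of ω^{−ᵀ}ω^{−1}) such that ω·F·H·ω^{−1} + ω^{−ᵀ}·H·Fᵀ·ωᵀ ⪯ −σ·I. -/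
open Matrix

private lemma psd_smul' {n : ℕ} {A : Matrix (Fin n) (Fin n) ℝ} (hA : A.PosSemidef) {c : ℝ}
    (hc : 0 ≤ c) : (c • A).PosSemidef := by
  refine .of_dotProduct_mulVec_nonneg ?_ (fun x => ?_)
  · unfold Matrix.IsHermitian
    rw [conjTranspose_smul, hA.1]
    simp
  · rw [smul_mulVec, dotProduct_smul, smul_eq_mul]
    exact mul_nonneg hc (hA.dotProduct_mulVec_nonneg x)

private lemma symm_dot' {n : ℕ} {K : Matrix (Fin n) (Fin n) ℝ} (hK : Kᵀ = K) (x y : Fin n → ℝ) :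
    x ⬝ᵥ (K *ᵥ y) = (K *ᵥ x) ⬝ᵥ y := by
  rw [dotProduct_mulVec, ← vecMul_transpose, hK]

private lemma sq_psd' {n : ℕ} (γ : ℝ) (hγ : 0 < γ) {K : Matrix (Fin n) (Fin n) ℝ}
    (hKs : Kᵀ = K) (hK : K.PosSemidef)
    (hγK : (γ • (1 : Matrix (Fin n) (Fin n) ℝ) - K).PosSemidef) :
    ((γ^2) • (1 : Matrix (Fin n) (Fin n) ℝ) - K * K).PosSemidef := by
  open scoped MatrixOrder in
  set L := CFC.sqrt K with hLdef
  have hLs : Lᵀ = L := by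
    have := (open scoped MatrixOrder in (CFC.sqrt_nonneg K).posSemidef).1
    rwa [Matrix.IsHermitian, conjTranspose_eq_transpose_of_trivial] at this
  have hLL : L * L = K := open scoped MatrixOrder in CFC.sqrt_mul_sqrt_self K hK.nonneg
  refine .of_dotProduct_mulVec_nonneg ?_ (fun x => ?_)
  · unfold Matrix.IsHermitian
    rw [conjTranspose_eq_transpose_of_trivial]
    simp [transpose_sub, transpose_smul, transpose_mul, hKs]
  · have hstar : (star x : Fin n → ℝ) = x := by simp
    rw [hstar, sub_mulVec, dotProduct_sub, smul_mulVec, one_mulVec, dotProduct_smul,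
      smul_eq_mul]
    set y := L *ᵥ x with hy
    have h1 : x ⬝ᵥ ((K * K) *ᵥ x) = y ⬝ᵥ (K *ᵥ y) := by
      have : K * K = L * (K * L) := by rw [← hLL]; noncomm_ring
      rw [this, ← mulVec_mulVec, ← mulVec_mulVec, symm_dot' hLs, hy]
    have h2 : y ⬝ᵥ y = x ⬝ᵥ (K *ᵥ x) := by
      rw [hy, ← symm_dot' hLs, mulVec_mulVec, hLL]
    have h3 : y ⬝ᵥ (K *ᵥ y) ≤ γ * (y ⬝ᵥ y) := by
      have := hγK.dotProduct_mulVec_nonneg y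
      simp only [star_trivial, sub_mulVec, dotProduct_sub, smul_mulVec, one_mulVec,
        dotProduct_smul, smul_eq_mul] at this
      linarith
    have h4 : x ⬝ᵥ (K *ᵥ x) ≤ γ * (x ⬝ᵥ x) := by
      have := hγK.dotProduct_mulVec_nonneg x
      simp only [star_trivial, sub_mulVec, dotProduct_sub, smul_mulVec, one_mulVec,
        dotProduct_smul, smul_eq_mul] at this
      linarith
    have h5 : x ⬝ᵥ ((K * K) *ᵥ x) ≤ γ^2 * (x ⬝ᵥ x) := by
      rw [h1]
      calc y ⬝ᵥ (K *ᵥ y) ≤ γ * (y ⬝ᵥ y) := h3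
        _ = γ * (x ⬝ᵥ (K *ᵥ x)) := by rw [h2]
        _ ≤ γ * (γ * (x ⬝ᵥ x)) := by nlinarith
        _ = γ^2 * (x ⬝ᵥ x) := by ring
    linarith


/-- If moreover the algebraic Riccati equation
`ΩF + FᵀΩ + (γ+ε)I + γΩFFᵀΩ = 0` holds for some `ε > 0`, then
`ωFHω⁻¹ + ω⁻ᵀHFᵀωᵀ ⪯ −βε·ω⁻ᵀω⁻¹`, and consequently there is `σ > 0` with
`ωFHω⁻¹ + ω⁻ᵀHFᵀωᵀ ⪯ −σ·I`. -/
theorem contraction_rate_from_riccati {n : ℕ}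
    (F H ω : Matrix (Fin n) (Fin n) ℝ)
    (hHsymm : Hᵀ = H) (α β : ℝ) (hα : 0 < α) (hαβ : α < β)
    (hlow : (H - α • (1 : Matrix (Fin n) (Fin n) ℝ)).PosDef)
    (hhigh : (β • (1 : Matrix (Fin n) (Fin n) ℝ) - H).PosDef)
    (hω : IsUnit ω.det)
    (ε : ℝ) (hε : 0 < ε)
    (hriccati : ωᵀ * ω * F + Fᵀ * (ωᵀ * ω) +
        (1 - α / β + ε) • (1 : Matrix (Fin n) (Fin n) ℝ) +
        (1 - α / β) • (ωᵀ * ω * F * Fᵀ * (ωᵀ * ω)) = 0) :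
    ((-(β * ε)) • ((ω⁻¹)ᵀ * ω⁻¹) -
        (ω * F * H * ω⁻¹ + (ω⁻¹)ᵀ * H * Fᵀ * ωᵀ)).PosSemidef ∧
    ∃ σ : ℝ, 0 < σ ∧
      ((-σ) • (1 : Matrix (Fin n) (Fin n) ℝ) -
        (ω * F * H * ω⁻¹ + (ω⁻¹)ᵀ * H * Fᵀ * ωᵀ)).PosSemidef := by
  have hβ : 0 < β := hα.trans hαβ
  set Ω : Matrix (Fin n) (Fin n) ℝ := ωᵀ * ω with hΩdef
  set γ : ℝ := 1 - α / β with hγdef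
  have hγ : 0 < γ := by
    have : α / β < 1 := (div_lt_one hβ).2 hαβ
    simp [hγdef]; linarith
  have hΩs : Ωᵀ = Ω := by
    rw [hΩdef, transpose_mul, transpose_transpose]
  set K : Matrix (Fin n) (Fin n) ℝ := 1 - β⁻¹ • H with hKdef
  have hKs : Kᵀ = K := by
    rw [hKdef, transpose_sub, transpose_smul, hHsymm, transpose_one]
  have hH2 : H = β • (1 : Matrix (Fin n) (Fin n) ℝ) - β • K := by
    rw [hKdef, smul_sub, smul_smul, mul_inv_cancel₀ hβ.ne', one_smul]
    module
  have hKpsd : K.PosSemidef := by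
    have hKeq : K = β⁻¹ • (β • (1 : Matrix (Fin n) (Fin n) ℝ) - H) := by
      rw [hKdef, smul_sub, smul_smul, inv_mul_cancel₀ hβ.ne', one_smul]
    rw [hKeq]
    exact psd_smul' hhigh.posSemidef (by positivity)
  have hγKpsd : (γ • (1 : Matrix (Fin n) (Fin n) ℝ) - K).PosSemidef := by
    have heq : γ • (1 : Matrix (Fin n) (Fin n) ℝ) - K
        = β⁻¹ • (H - α • (1 : Matrix (Fin n) (Fin n) ℝ)) := by
      rw [hKdef, hγdef]
      have hq : α / β = β⁻¹ * α := by field_simp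
      rw [hq]
      module
    rw [heq]
    exact psd_smul' hlow.posSemidef (by positivity)
  set S : Matrix (Fin n) (Fin n) ℝ := γ • (Ω * F) + K with hSdef
  set T : Matrix (Fin n) (Fin n) ℝ :=
    S * Sᵀ + (γ^2 • (1 : Matrix (Fin n) (Fin n) ℝ) - K * K) with hTdef
  set N : Matrix (Fin n) (Fin n) ℝ :=
    (-(β * ε)) • (1 : Matrix (Fin n) (Fin n) ℝ) - (Ω * F * H + H * Fᵀ * Ω) with hNdef
  have key : γ • N = β • T + (-(γ * β)) • (Ω * F + Fᵀ * Ω +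
      (γ + ε) • (1 : Matrix (Fin n) (Fin n) ℝ) + γ • (Ω * F * Fᵀ * Ω)) := by
    have hS : Sᵀ = γ • (Fᵀ * Ω) + K := by
      rw [hSdef]
      simp [transpose_add, transpose_smul, transpose_mul, hΩs, hKs]
    rw [hNdef, hTdef, hSdef, hS, hH2]
    simp only [Matrix.mul_sub, Matrix.sub_mul, Matrix.mul_add, Matrix.add_mul,
      Matrix.mul_smul, Matrix.smul_mul, mul_one, one_mul, smul_add, smul_sub, smul_smul,
      mul_assoc]
    module
  rw [hriccati, smul_zero, add_zero] at key
  have hTpsd : T.PosSemidef := by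
    have h1 : (S * Sᵀ).PosSemidef := by
      have := Matrix.posSemidef_self_mul_conjTranspose S
      rwa [conjTranspose_eq_transpose_of_trivial] at this
    exact h1.add (sq_psd' γ hγ hKs hKpsd hγKpsd)
  have hNpsd : N.PosSemidef := by
    have hN2 : N = (γ⁻¹ * β) • T := by
      rw [← smul_smul, ← key, smul_smul, inv_mul_cancel₀ hγ.ne', one_smul]
    rw [hN2]
    exact psd_smul' hTpsd (by positivity)
  have hinv : ω * ω⁻¹ = 1 := mul_nonsing_inv ω hω
  have hinvT : (ω⁻¹)ᵀ * ωᵀ = 1 := by rw [← transpose_mul, hinv, transpose_one]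
  have hct : (ω⁻¹)ᴴ = (ω⁻¹)ᵀ := conjTranspose_eq_transpose_of_trivial _
  have hG : (-(β * ε)) • ((ω⁻¹)ᵀ * ω⁻¹) -
      (ω * F * H * ω⁻¹ + (ω⁻¹)ᵀ * H * Fᵀ * ωᵀ) = (ω⁻¹)ᵀ * N * ω⁻¹ := by
    rw [hNdef, hΩdef]
    simp only [Matrix.mul_sub, Matrix.sub_mul, Matrix.mul_add, Matrix.add_mul,
      Matrix.mul_smul, Matrix.smul_mul, mul_one, ← mul_assoc]
    rw [hinvT, one_mul, Matrix.mul_nonsing_inv_cancel_right _ _ hω]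
  have hGpsd : ((-(β * ε)) • ((ω⁻¹)ᵀ * ω⁻¹) -
      (ω * F * H * ω⁻¹ + (ω⁻¹)ᵀ * H * Fᵀ * ωᵀ)).PosSemidef := by
    rw [hG, ← hct]
    exact hNpsd.conjTranspose_mul_mul_same ω⁻¹
  refine ⟨hGpsd, ?_⟩
  set C : ℝ := (∑ i, ∑ j, (ω i j)^2) + 1 with hCdef
  have hC : 0 < C := by
    have : (0:ℝ) ≤ ∑ i, ∑ j, (ω i j)^2 := by positivity
    simp [hCdef]; linarith
  refine ⟨β * ε / C, by positivity, ?_⟩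
  set σ : ℝ := β * ε / C with hσdef
  have hσC : σ * C = β * ε := by
    rw [hσdef]; field_simp
  have hσpos : 0 < σ := by positivity
  have hEpsd : ((β * ε) • (1 : Matrix (Fin n) (Fin n) ℝ) - σ • Ω).PosSemidef := by
    refine .of_dotProduct_mulVec_nonneg ?_ (fun x => ?_)
    · unfold Matrix.IsHermitian
      rw [conjTranspose_eq_transpose_of_trivial]
      simp [transpose_sub, transpose_smul, hΩs]
    · have hstar : (star x : Fin n → ℝ) = x := by simp
      rw [hstar, sub_mulVec, dotProduct_sub, smul_mulVec, smul_mulVec,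
        one_mulVec, dotProduct_smul, dotProduct_smul, smul_eq_mul, smul_eq_mul]
      have hq : x ⬝ᵥ (Ω *ᵥ x) = (ω *ᵥ x) ⬝ᵥ (ω *ᵥ x) := by
        rw [hΩdef, ← mulVec_mulVec, dotProduct_mulVec, vecMul_transpose]
      have hbound : (ω *ᵥ x) ⬝ᵥ (ω *ᵥ x) ≤ (C - 1) * (x ⬝ᵥ x) := by
        have h1 : ∀ i, ((ω *ᵥ x) i)^2 ≤ (∑ j, (ω i j)^2) * (∑ j, (x j)^2) := by
          intro i
          have := Finset.sum_mul_sq_le_sq_mul_sq Finset.univ (fun j => ω i j) x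
          simpa [Matrix.mulVec, dotProduct] using this
        have h2 : (ω *ᵥ x) ⬝ᵥ (ω *ᵥ x) = ∑ i, ((ω *ᵥ x) i)^2 := by
          simp [dotProduct, sq]
        have h3 : x ⬝ᵥ x = ∑ j, (x j)^2 := by simp [dotProduct, sq]
        rw [h2, h3]
        calc ∑ i, ((ω *ᵥ x) i)^2 ≤ ∑ i, (∑ j, (ω i j)^2) * (∑ j, (x j)^2) :=
              Finset.sum_le_sum (fun i _ => h1 i)
          _ = (∑ i, ∑ j, (ω i j)^2) * (∑ j, (x j)^2) := by rw [← Finset.sum_mul]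
          _ ≤ (C - 1) * (∑ j, (x j)^2) := by
              apply mul_le_mul_of_nonneg_right _ (by positivity)
              simp [hCdef]
      have hxx : 0 ≤ x ⬝ᵥ x := by
        have : x ⬝ᵥ x = ∑ j, (x j)^2 := by simp [dotProduct, sq]
        rw [this]; positivity
      rw [hq]
      nlinarith [hbound, hxx, mul_le_mul_of_nonneg_left hbound hσpos.le]
  have hD : (β * ε) • ((ω⁻¹)ᵀ * ω⁻¹) - σ • (1 : Matrix (Fin n) (Fin n) ℝ) =
      (ω⁻¹)ᵀ * ((β * ε) • (1 : Matrix (Fin n) (Fin n) ℝ) - σ • Ω) * ω⁻¹ := by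
    rw [hΩdef]
    simp only [Matrix.mul_sub, Matrix.sub_mul, Matrix.mul_smul, Matrix.smul_mul, mul_one,
      ← mul_assoc]
    rw [hinvT, one_mul, hinv]
  have hDpsd : ((β * ε) • ((ω⁻¹)ᵀ * ω⁻¹) -
      σ • (1 : Matrix (Fin n) (Fin n) ℝ)).PosSemidef := by
    rw [hD, ← hct]
    exact hEpsd.conjTranspose_mul_mul_same ω⁻¹
  have hsplit : (-σ) • (1 : Matrix (Fin n) (Fin n) ℝ) -
      (ω * F * H * ω⁻¹ + (ω⁻¹)ᵀ * H * Fᵀ * ωᵀ) =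
      ((-(β * ε)) • ((ω⁻¹)ᵀ * ω⁻¹) - (ω * F * H * ω⁻¹ + (ω⁻¹)ᵀ * H * Fᵀ * ωᵀ)) +
      ((β * ε) • ((ω⁻¹)ᵀ * ω⁻¹) - σ • (1 : Matrix (Fin n) (Fin n) ℝ)) := by
    module
  rw [hsplit]
  exact hGpsd.add hDpsd
end
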